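/- arXiv:math/0210470 — 4 statements merged into one kernel-verified Lean document; each statement's English description precedes it below -/
import Mathlib

section
/- Suppose Condition 𝒜 holds. Then for every c with 0 < c < 1/K², the expected optimal value satisfies sup_n E[LP(n,c)] < ∞; that is, E[LP(n,c)] = O(1) as n → ∞. -/
open MeasureTheory ProbabilityTheory Filter

noncomputable section

/-- The sample space for a random instance of the K-LSAT problem with `n` variables and
`m` constraints, over a family of `N` prototype constraints in `K` variables: for each of the
`m` constraints we record the ordered `K`-tuple of chosen variable indices and the index of the
chosen prototype constraint. -/
abbrev LPInst (K N n m : ℕ) : Type := Fin m → (Fin K → Fin n) × Fin N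

/-- The law of a random instance: for each of the `m` constraints, independently, the `K`-tuple
of variable indices and the constraint type are chosen uniformly at random. -/
def lpMeasure (K N n m : ℕ) : Measure (LPInst K N n m) :=
  uniformOn (Set.univ : Set (LPInst K N n m))

/-- The optimal value `LP(n,c)` of the random linear program:
minimize `Σ_j ψ_j` subject to `Σ_k a_{r_j,k} x_{i_k(j)} ≤ b_{r_j} + ψ_j` for each constraint `j`,
`x_i ∈ [B¹ₓ, B²ₓ]` and `ψ_j ≥ 0`. -/
def LPval {K N n m : ℕ} (A : Fin N → Fin K → ℝ) (bv : Fin N → ℝ)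
    (B1 B2 : ℝ) (ω : LPInst K N n m) : ℝ :=
  sInf { v : ℝ | ∃ (x : Fin n → ℝ) (ψ : Fin m → ℝ),
    (∀ i, x i ∈ Set.Icc B1 B2) ∧ (∀ j, 0 ≤ ψ j) ∧
    (∀ j, ∑ k, A ((ω j).2) k * x ((ω j).1 k) ≤ bv ((ω j).2) + ψ j) ∧
    v = ∑ j, ψ j }

/-- Condition 𝒜: for every prototype constraint `a_r·y ≤ b_r`, every coordinate `k`, and every
`z ∈ [B¹ₓ, B²ₓ]`, there are `y₁,…,y_K ∈ [B¹ₓ, B²ₓ]` with `y_k = z` satisfying the constraint. -/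
def ConditionA {K N : ℕ} (A : Fin N → Fin K → ℝ) (bv : Fin N → ℝ) (B1 B2 : ℝ) : Prop :=
  ∀ r : Fin N, ∀ k : Fin K, ∀ z ∈ Set.Icc B1 B2,
    ∃ y : Fin K → ℝ, (∀ k', y k' ∈ Set.Icc B1 B2) ∧ y k = z ∧
      ∑ k', A r k' * y k' ≤ bv r

/-- Condition ℬ with explicit parameters `l` and `ν`: for every `K`-dimensional cube
`I = Π_k [t_k/l, (t_k+1)/l]` with `t_k` integer and `B¹ₓ ≤ t_k/l < B²ₓ`, some prototype
constraint `a_r·y ≤ b_r` satisfies `Σ_k a_{r,k} y_k − b_r ≥ ν` for every `y ∈ I`. -/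
def ConditionBWith {K N : ℕ} (A : Fin N → Fin K → ℝ) (bv : Fin N → ℝ) (B1 B2 : ℝ)
    (l : ℕ) (ν : ℝ) : Prop :=
  0 < l ∧ 0 < ν ∧
    ∀ t : Fin K → ℤ, (∀ k, B1 ≤ (t k : ℝ) / l ∧ (t k : ℝ) / l < B2) →
      ∃ r : Fin N, ∀ y : Fin K → ℝ,
        (∀ k, y k ∈ Set.Icc ((t k : ℝ) / l) (((t k : ℝ) + 1) / l)) →
        ν ≤ ∑ k, A r k * y k - bv r

/-- Condition ℬ: there exist a positive integer `l` and `ν > 0` as in `ConditionBWith`. -/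
def ConditionB {K N : ℕ} (A : Fin N → Fin K → ℝ) (bv : Fin N → ℝ) (B1 B2 : ℝ) : Prop :=
  ∃ (l : ℕ) (ν : ℝ), ConditionBWith A bv B1 B2 l ν

/-!
The constraints form a random hypergraph on the variables, each constraint an edge with `K`
slots. Constraints lying on no cycle of this hypergraph cost nothing: they can be satisfied
together by repeatedly peeling off a leaf and using Condition 𝒜 to extend a solution of the rest
across the single vertex the leaf shares with it. Every other constraint costs at most a
constant `D`. A fixed constraint closes a cycle of length `L + 1` with probability at most
`K² (m K² / n)^L / n`, so when `m K² ≤ q n` with `q = c K² < 1` the expected number of such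
constraints is at most `q / (1 - q)`, uniformly in `n`.
-/

namespace Hypergraph

open Finset

variable {ι κ V : Type*}

section Defs

variable (f : ι → κ → V)

/-- A trail is a list of triples `(e, a, b)`: it enters the edge `e` at its vertex `f e a` and
leaves it at `f e b`, which is where the next triple enters. -/
def IsTrail (s : Finset ι) : V → List (ι × κ × κ) → V → Prop
  | u, [], v => u = v
  | u, (e, a, b) :: p, v => e ∈ s ∧ a ≠ b ∧ f e a = u ∧ IsTrail s (f e b) p v

def IsPath (s : Finset ι) (u : V) (p : List (ι × κ × κ)) (v : V) : Prop :=
  (p.map Prod.fst).Nodup ∧ IsTrail f s u p v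

def Linked (s : Finset ι) (u v : V) : Prop :=
  ∃ p, IsPath f s u p v

def OnCycle [DecidableEq ι] (s : Finset ι) (j : ι) : Prop :=
  ∃ k k', k ≠ k' ∧ Linked f (s.erase j) (f j k) (f j k')

def IsAcyclic [DecidableEq ι] (s : Finset ι) : Prop :=
  ∀ j ∈ s, ¬OnCycle f s j

end Defs

variable {f : ι → κ → V} {s t : Finset ι} {u v w : V}

theorem isTrail_append {p q : List (ι × κ × κ)} :
    IsTrail f s u (p ++ q) w ↔ ∃ v, IsTrail f s u p v ∧ IsTrail f s v q w := by
  induction p generalizing u with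
  | nil => simp [IsTrail]
  | cons x p ih =>
    obtain ⟨e, a, b⟩ := x
    simp only [List.cons_append, IsTrail, ih]
    constructor
    · rintro ⟨he, hab, hu, v, hp, hq⟩
      exact ⟨v, ⟨he, hab, hu, hp⟩, hq⟩
    · rintro ⟨v, ⟨he, hab, hu, hp⟩, hq⟩
      exact ⟨he, hab, hu, v, hp, hq⟩

theorem IsTrail.forall_mem {p : List (ι × κ × κ)} (h : IsTrail f s u p v) :
    ∀ x ∈ p, x.1 ∈ s ∧ x.2.1 ≠ x.2.2 := by
  induction p generalizing u with
  | nil => simp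
  | cons x p ih =>
    obtain ⟨e, a, b⟩ := x
    obtain ⟨he, hab, -, hp⟩ := h
    simpa [he, hab] using ih hp

theorem IsTrail.mono {p : List (ι × κ × κ)} (hst : s ⊆ t) (h : IsTrail f s u p v) :
    IsTrail f t u p v := by
  induction p generalizing u with
  | nil => exact h
  | cons x p ih =>
    obtain ⟨e, a, b⟩ := x
    obtain ⟨he, hab, hu, hp⟩ := h
    exact ⟨hst he, hab, hu, ih hp⟩

theorem IsTrail.eq_of_eq_on_exits {g : ι → κ → V} {p : List (ι × κ × κ)}
    (hf : IsTrail f s u p v) (hg : IsTrail g s u p w)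
    (hexit : ∀ x ∈ p, f x.1 x.2.2 = g x.1 x.2.2) :
    v = w ∧ ∀ x ∈ p, f x.1 x.2.1 = g x.1 x.2.1 := by
  induction p generalizing u with
  | nil => exact ⟨hf.symm.trans hg, by simp⟩
  | cons x p ih =>
    obtain ⟨e, a, b⟩ := x
    obtain ⟨-, -, hfa, hf⟩ := hf
    obtain ⟨-, -, hga, hg⟩ := hg
    rw [hexit (e, a, b) List.mem_cons_self] at hf
    obtain ⟨hvw, hentry⟩ := ih hf hg fun x hx => hexit x (List.mem_cons_of_mem _ hx)
    exact ⟨hvw, by simpa [hfa, hga] using hentry⟩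

theorem Linked.refl : Linked f s u u :=
  ⟨[], List.nodup_nil, rfl⟩

theorem Linked.mono (hst : s ⊆ t) (h : Linked f s u v) : Linked f t u v :=
  let ⟨p, hnd, hp⟩ := h
  ⟨p, hnd, hp.mono hst⟩

/-- Appending an edge to a path either extends it or, if the edge already occurs, shortcuts it. -/
theorem Linked.tail {e : ι} {a b : κ} (h : Linked f s u v) (he : e ∈ s) (ha : f e a = v) :
    Linked f s u (f e b) := by
  obtain ⟨p, hnd, hp⟩ := h
  by_cases hep : e ∈ p.map Prod.fst
  · obtain ⟨⟨e, a', b'⟩, hmem, rfl⟩ := List.mem_map.1 hep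
    obtain ⟨p₁, p₂, rfl⟩ := List.append_of_mem hmem
    obtain ⟨w, hp₁, -, -, hw, -⟩ := isTrail_append.1 hp
    have hnd' : ((p₁ ++ [(e, a', b)]).map Prod.fst).Nodup := by
      refine hnd.sublist ?_
      simp only [List.map_append, List.map_cons, List.map_nil]
      exact List.Sublist.append_left (List.Sublist.cons_cons _ (List.nil_sublist _)) _
    by_cases hab : a' = b
    · subst hab
      exact ⟨p₁, List.Nodup.of_append_left (by simpa using hnd), hw ▸ hp₁⟩
    · exact ⟨_, hnd', isTrail_append.2 ⟨w, hp₁, he, hab, hw, rfl⟩⟩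
  · by_cases hab : a = b
    · subst hab
      exact ha ▸ ⟨p, hnd, hp⟩
    · refine ⟨p ++ [(e, a, b)], ?_, isTrail_append.2 ⟨v, hp, he, hab, ha, rfl⟩⟩
      simp only [List.map_append, List.map_cons, List.map_nil]
      exact hnd.append (List.nodup_singleton e) (List.disjoint_singleton.2 hep)

section Acyclic

variable [DecidableEq ι]

theorem OnCycle.mono {j : ι} (hst : s ⊆ t) (h : OnCycle f s j) : OnCycle f t j :=
  let ⟨k, k', hk, hl⟩ := h
  ⟨k, k', hk, hl.mono (erase_subset_erase j hst)⟩

theorem IsAcyclic.mono (ht : IsAcyclic f t) (hst : s ⊆ t) : IsAcyclic f s :=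
  fun j hj hc => ht j (hst hj) (hc.mono hst)

theorem IsAcyclic.injective {j : ι} (hs : IsAcyclic f s) (hj : j ∈ s) :
    Function.Injective (f j) :=
  fun k k' h => by_contra fun hk => hs j hj ⟨k, k', hk, h ▸ Linked.refl⟩

/-- The walk enters `e t` at slot `c t` and leaves it at slot `o t`. At its first return to an
edge, the edge visited right after that one lies on a cycle. -/
theorem exists_onCycle_of_walk (e : ℕ → ι) (c o : ℕ → κ) (he : ∀ t, e t ∈ s)
    (hadv : ∀ t, e (t + 1) ≠ e t) (hoc : ∀ t, o t ≠ c t)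
    (hstep : ∀ t, f (e (t + 1)) (c (t + 1)) = f (e t) (o t)) :
    ∃ j ∈ s, OnCycle f s j := by
  classical
  have hrep : ∃ b, ∃ a < b, e a = e b := by
    obtain ⟨x, y, hxy, h⟩ := Finite.exists_ne_map_eq_of_infinite fun t => (⟨e t, he t⟩ : s)
    rcases hxy.lt_or_gt with hlt | hlt
    · exact ⟨y, x, hlt, congrArg Subtype.val h⟩
    · exact ⟨x, y, hlt, congrArg Subtype.val h.symm⟩
  obtain ⟨i, hib, hei⟩ := Nat.find_spec hrep
  set b := Nat.find hrep
  have hdist : ∀ a a', a < a' → a' < b → e a ≠ e a' :=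
    fun a a' ha hb h => Nat.find_min hrep hb ⟨a, ha, h⟩
  have hi1 : i + 1 < b := lt_of_le_of_ne hib fun h => hadv i (h ▸ hei).symm
  have hwalk : ∀ t, i + 2 ≤ t → t ≤ b →
      Linked f (s.erase (e (i + 1))) (f (e (i + 1)) (o (i + 1))) (f (e t) (c t)) := by
    intro t ht htb
    induction t, ht using Nat.le_induction with
    | base => rw [hstep]; exact Linked.refl
    | succ t ht ih =>
      rw [hstep]
      exact (ih (by omega)).tail
        (mem_erase.2 ⟨(hdist _ _ (by omega) (by omega)).symm, he t⟩) rfl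
  refine ⟨e (i + 1), he _, o (i + 1), c (i + 1), hoc _, ?_⟩
  rw [hstep i]
  exact (hwalk b (by omega) le_rfl).tail
    (mem_erase.2 ⟨hdist i (i + 1) (by omega) hi1, he i⟩) (by rw [hei])

/-- Otherwise every edge can be left through a vertex it shares with another edge. -/
theorem IsAcyclic.exists_leaf [Nonempty κ] (hs : IsAcyclic f s) (hne : s.Nonempty) :
    ∃ j ∈ s, ∃ k₀, ∀ k ≠ k₀, ∀ j' ∈ s.erase j, ∀ k', f j' k' ≠ f j k := by
  by_contra! h
  obtain ⟨j₀, hj₀⟩ := hne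
  have : Nonempty ι := ⟨j₀⟩
  choose! o ho nxt hnxt c hc using h
  let flag : ℕ → ι × κ := fun t =>
    Nat.rec (j₀, Classical.arbitrary κ) (fun _ q => (nxt q.1 q.2, c q.1 q.2)) t
  have hmem : ∀ t, (flag t).1 ∈ s := by
    intro t
    induction t with
    | zero => exact hj₀
    | succ t ih => exact (mem_erase.1 (hnxt _ ih _)).2
  obtain ⟨j, hj, hcyc⟩ := exists_onCycle_of_walk (f := f) (fun t => (flag t).1)
    (fun t => (flag t).2) (fun t => o (flag t).1 (flag t).2) hmem
    (fun t => (mem_erase.1 (hnxt _ (hmem t) _)).1) (fun t => ho _ (hmem t) _)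
    (fun t => hc _ (hmem t) _)
  exact hs j hj hcyc

theorem IsAcyclic.exists_forall_sat [Nonempty κ] {α : Type*} {I : Set α}
    {P : ι → (κ → α) → Prop} (hI : I.Nonempty)
    (hP : ∀ j k, ∀ z ∈ I, ∃ y : κ → α, (∀ k', y k' ∈ I) ∧ y k = z ∧ P j y)
    (hs : IsAcyclic f s) :
    ∃ x : V → α, (∀ v, x v ∈ I) ∧ ∀ j ∈ s, P j (x ∘ f j) := by
  induction s using Finset.strongInduction with
  | H s ih =>
  rcases s.eq_empty_or_nonempty with rfl | hne
  · obtain ⟨z, hz⟩ := hI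
    exact ⟨fun _ => z, fun _ => hz, by simp⟩
  obtain ⟨j, hj, k₀, hleaf⟩ := hs.exists_leaf hne
  obtain ⟨x, hxI, hx⟩ := ih _ (erase_ssubset hj) (hs.mono (erase_subset j s))
  obtain ⟨y, hyI, hyk₀, hy⟩ := hP j k₀ (x (f j k₀)) (hxI _)
  have hinj := hs.injective hj
  refine ⟨Function.extend (f j) y x, fun v => ?_, fun j' hj' => ?_⟩
  · by_cases hv : ∃ k, f j k = v
    · obtain ⟨k, rfl⟩ := hv
      rw [hinj.extend_apply]
      exact hyI k
    · rw [Function.extend_apply' _ _ _ hv]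
      exact hxI v
  rcases eq_or_ne j' j with rfl | hj'j
  · convert hy using 1
    exact funext fun k => hinj.extend_apply y x k
  · have hj'' : j' ∈ s.erase j := mem_erase.2 ⟨hj'j, hj'⟩
    convert hx j' hj'' using 1
    funext k'
    by_cases hv : ∃ k, f j k = f j' k'
    · obtain ⟨k, hk⟩ := hv
      obtain rfl : k = k₀ := by_contra fun hkk => hleaf k hkk j' hj'' k' hk.symm
      simp only [Function.comp_apply, ← hk, hinj.extend_apply, hyk₀]
    · exact Function.extend_apply' _ _ _ hv

end Acyclic

section Slots

variable [DecidableEq ι] [DecidableEq κ] {p : List (ι × κ × κ)}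

def entrySlots (p : List (ι × κ × κ)) : Finset (ι × κ) :=
  (p.map fun x => (x.1, x.2.1)).toFinset

theorem IsTrail.notMem_entrySlots {e : ι} (h : IsTrail f s u p v) (he : e ∉ s) (c : κ) :
    (e, c) ∉ entrySlots p := by
  simp only [entrySlots, List.mem_toFinset, List.mem_map, Prod.mk.injEq, not_exists, not_and]
  exact fun x hx hxe _ => he (hxe ▸ (h.forall_mem x hx).1)

theorem IsPath.card_entrySlots (h : IsPath f s u p v) : #(entrySlots p) = p.length := by
  rw [entrySlots, List.toFinset_card_of_nodup, List.length_map]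
  exact List.Nodup.of_map Prod.fst (by rw [List.map_map]; exact h.1)

theorem IsPath.exit_notMem_entrySlots (h : IsPath f s u p v) {x : ι × κ × κ} (hx : x ∈ p) :
    (x.1, x.2.2) ∉ entrySlots p := by
  simp only [entrySlots, List.mem_toFinset, List.mem_map, Prod.mk.injEq, not_exists, not_and]
  intro y hy he
  obtain rfl := List.inj_on_of_nodup_map h.1 hy hx he
  exact (h.2.forall_mem y hy).2

theorem eq_of_isPath_of_eq_off {g : ι → κ → V} {j : ι} {k k' : κ} (hk : k ≠ k')
    (hf : IsPath f (s.erase j) (f j k) p (f j k')) (hg : IsPath g (s.erase j) (g j k) p (g j k'))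
    (hoff : ∀ e c, (e, c) ∉ insert (j, k') (entrySlots p) → f e c = g e c) : f = g := by
  have hjk : (j, k) ∉ insert (j, k') (entrySlots p) := by
    simp [hk, hf.2.notMem_entrySlots (notMem_erase j s)]
  have hexit : ∀ x ∈ p, (x.1, x.2.2) ∉ insert (j, k') (entrySlots p) := by
    intro x hx
    simp only [mem_insert, Prod.mk.injEq, not_or, not_and]
    exact ⟨fun h => absurd h (mem_erase.1 (hf.2.forall_mem x hx).1).1,
      hf.exit_notMem_entrySlots hx⟩
  obtain ⟨hend, hentry⟩ :=
    hf.2.eq_of_eq_on_exits (hoff j k hjk ▸ hg.2) fun x hx => hoff _ _ (hexit x hx)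
  funext e c
  by_cases hq : (e, c) ∈ insert (j, k') (entrySlots p)
  · rcases mem_insert.1 hq with h | h
    · obtain ⟨rfl, rfl⟩ := Prod.mk.injEq _ _ _ _ ▸ h
      exact hend
    · obtain ⟨x, hx, hxe⟩ := List.mem_map.1 (List.mem_toFinset.1 h)
      obtain ⟨rfl, rfl⟩ := Prod.mk.injEq _ _ _ _ ▸ hxe
      exact hentry x hx
  · exact hoff e c hq

end Slots

end Hypergraph

section RandomLP

open Finset Hypergraph MeasureTheory ProbabilityTheory
open scoped Classical

variable {K N n m : ℕ}

def LPInst.var (ω : LPInst K N n m) (j : Fin m) (k : Fin K) : Fin n := (ω j).1 k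

def IsViolationBound (A : Fin N → Fin K → ℝ) (bv : Fin N → ℝ) (B1 B2 D : ℝ) : Prop :=
  ∀ r (y : Fin K → ℝ), (∀ k, y k ∈ Set.Icc B1 B2) → ∑ k, A r k * y k ≤ bv r + D

theorem exists_isViolationBound (A : Fin N → Fin K → ℝ) (bv : Fin N → ℝ) (B1 B2 : ℝ) :
    ∃ D, 0 ≤ D ∧ IsViolationBound A bv B1 B2 D := by
  set M := max |B1| |B2|
  refine ⟨∑ r, (∑ k, |A r k| * M + |bv r|), by positivity, fun r y hy => ?_⟩
  have hAy : ∑ k, A r k * y k ≤ ∑ k, |A r k| * M := by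
    refine sum_le_sum fun k _ => ?_
    calc A r k * y k ≤ |A r k| * |y k| := (le_abs_self _).trans (abs_mul _ _).le
      _ ≤ |A r k| * M := by gcongr; exact abs_le_max_abs_abs (hy k).1 (hy k).2
  have hr : ∑ k, |A r k| * M + |bv r| ≤ ∑ r, (∑ k, |A r k| * M + |bv r|) :=
    single_le_sum (f := fun r => ∑ k, |A r k| * M + |bv r|) (fun _ _ => by positivity)
      (mem_univ r)
  linarith [neg_abs_le (bv r)]

variable {A : Fin N → Fin K → ℝ} {bv : Fin N → ℝ} {B1 B2 D : ℝ}

theorem lpval_le_mul_card_onCycle (hK : 0 < K) (hB : B1 ≤ B2) (hA : ConditionA A bv B1 B2)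
    (hD0 : 0 ≤ D) (hD : IsViolationBound A bv B1 B2 D) (ω : LPInst K N n m) :
    LPval A bv B1 B2 ω ≤ D * #{j | OnCycle ω.var univ j} := by
  have : Nonempty (Fin K) := ⟨⟨0, hK⟩⟩
  have hG : IsAcyclic ω.var {j | ¬OnCycle ω.var univ j} :=
    fun j hj hc => (mem_filter.1 hj).2 (hc.mono (subset_univ _))
  obtain ⟨x, hxI, hx⟩ := hG.exists_forall_sat
    (P := fun j y => ∑ k, A (ω j).2 k * y k ≤ bv (ω j).2) ⟨B1, Set.left_mem_Icc.2 hB⟩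
    fun j k z hz => hA _ k z hz
  refine csInf_le ⟨0, fun v ⟨_, ψ, _, hψ, _, hv⟩ => hv ▸ sum_nonneg fun j _ => hψ j⟩
    ⟨x, fun j => if OnCycle ω.var univ j then D else 0, hxI, fun j => ?_, fun j => ?_, ?_⟩
  · dsimp only
    split_ifs <;> simp [hD0]
  · dsimp only
    split_ifs with hj
    · exact hD _ _ fun k => hxI _
    · simpa [LPInst.var] using hx j (mem_filter.2 ⟨mem_univ _, hj⟩)
  · rw [sum_ite, sum_const_zero, sum_const, add_zero, nsmul_eq_mul, mul_comm]

/-- The path pins the `p.length + 1` slots in `insert (j, k') (entrySlots p)` as functions of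
the other slots, so restricting an instance to the other slots is injective on the event. -/
theorem card_isPath_mul_pow_le (j : Fin m) {k k' : Fin K} (hk : k ≠ k')
    (p : List (Fin m × Fin K × Fin K)) :
    #{ω : LPInst K N n m | IsPath ω.var (univ.erase j) (ω.var j k) p (ω.var j k')} *
      n ^ (p.length + 1) ≤ Fintype.card (LPInst K N n m) := by
  set E := ({ω : LPInst K N n m | IsPath ω.var (univ.erase j) (ω.var j k) p (ω.var j k')} :
    Finset _)
  rcases E.eq_empty_or_nonempty with hE | ⟨ω₀, hω₀⟩
  · simp [hE]
  have hpath := (mem_filter.1 hω₀).2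
  set S := insert (j, k') (entrySlots p)
  have hS : #S = p.length + 1 := by
    rw [card_insert_of_notMem (hpath.2.notMem_entrySlots (notMem_erase j _) k'),
      hpath.card_entrySlots]
  let restrict : LPInst K N n m → ({q // q ∉ S} → Fin n) × (Fin m → Fin N) :=
    fun ω => (fun q => ω.var q.1.1 q.1.2, fun j => (ω j).2)
  have hinj : Set.InjOn restrict E := by
    intro ω hω ω' hω' h
    have hvar : ω.var = ω'.var := eq_of_isPath_of_eq_off hk (mem_filter.1 hω).2
      (mem_filter.1 hω').2 fun e c hq => congrFun (congrArg Prod.fst h) ⟨(e, c), hq⟩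
    exact funext fun j' => Prod.ext (congrFun hvar j') (congrFun (congrArg Prod.snd h) j')
  have hcard : Fintype.card {q // q ∉ S} = m * K - (p.length + 1) := by
    rw [Fintype.card_subtype_compl, Fintype.card_coe, hS, Fintype.card_prod, Fintype.card_fin,
      Fintype.card_fin]
  have hSle : p.length + 1 ≤ m * K := by
    simpa [hS] using card_le_univ S
  calc #E * n ^ (p.length + 1)
      ≤ Fintype.card (({q // q ∉ S} → Fin n) × (Fin m → Fin N)) * n ^ (p.length + 1) :=
        Nat.mul_le_mul_right _ (card_le_card_of_injOn restrict (fun _ _ => mem_univ _) hinj)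
    _ = Fintype.card (LPInst K N n m) := by
        simp only [Fintype.card_prod, Fintype.card_fun, hcard, Fintype.card_fin]
        rw [mul_right_comm, ← pow_add, Nat.sub_add_cancel hSle, mul_pow, ← pow_mul, mul_comm K]

theorem card_onCycle_le_sum_card_isPath (j : Fin m) :
    #{ω : LPInst K N n m | OnCycle ω.var univ j} ≤
      ∑ kk ∈ (univ : Finset (Fin K)).offDiag, ∑ L ∈ range (m + 1),
        ∑ g : Fin L → Fin m × Fin K × Fin K,
          #{ω : LPInst K N n m |
            IsPath ω.var (univ.erase j) (ω.var j kk.1) (List.ofFn g) (ω.var j kk.2)} := by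
  refine (card_le_card fun ω hω => ?_).trans <| card_biUnion_le.trans <|
    sum_le_sum fun _ _ => card_biUnion_le.trans <| sum_le_sum fun _ _ => card_biUnion_le
  obtain ⟨k, k', hk, p, hp⟩ := (mem_filter.1 hω).2
  have hlen : p.length ≤ m := by simpa using hp.1.length_le_card
  simp only [mem_biUnion, mem_offDiag, mem_univ, true_and, mem_range, mem_filter]
  exact ⟨(k, k'), hk, p.length, by omega, p.get, by rwa [List.ofFn_get]⟩

theorem card_onCycle_le (hn : 0 < n) (j : Fin m) :
    (#{ω : LPInst K N n m | OnCycle ω.var univ j} : ℝ) ≤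
      Fintype.card (LPInst K N n m) * (K ^ 2 / n) *
        ∑ L ∈ range (m + 1), ((m * K ^ 2 : ℝ) / n) ^ L := by
  set Ω := Fintype.card (LPInst K N n m)
  have hpath : ∀ kk ∈ (univ : Finset (Fin K)).offDiag,
      ∀ L (g : Fin L → Fin m × Fin K × Fin K),
      (#{ω : LPInst K N n m |
        IsPath ω.var (univ.erase j) (ω.var j kk.1) (List.ofFn g) (ω.var j kk.2)} : ℝ) ≤
        Ω / n ^ (L + 1) := by
    intro kk hkk L g
    rw [le_div_iff₀ (by positivity)]
    have := card_isPath_mul_pow_le (N := N) (n := n) j (mem_offDiag.1 hkk).2.2 (List.ofFn g)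
    rw [List.length_ofFn] at this
    exact_mod_cast this
  have hpairs : (#(univ : Finset (Fin K)).offDiag : ℝ) ≤ K ^ 2 := by
    rw [offDiag_card, card_univ, Fintype.card_fin]
    exact_mod_cast (Nat.sub_le _ _).trans (sq K).ge
  have hpaths : ∀ L, Fintype.card (Fin L → Fin m × Fin K × Fin K) = (m * K ^ 2) ^ L := by
    simp [sq]
  calc (#{ω : LPInst K N n m | OnCycle ω.var univ j} : ℝ)
      ≤ ∑ kk ∈ (univ : Finset (Fin K)).offDiag, ∑ L ∈ range (m + 1),
          ∑ _g : Fin L → Fin m × Fin K × Fin K, (Ω / n ^ (L + 1) : ℝ) := by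
        refine (Nat.cast_le.2 (card_onCycle_le_sum_card_isPath j)).trans ?_
        push_cast
        gcongr with kk hkk L _ g
        exact hpath kk hkk L g
    _ ≤ K ^ 2 * ∑ L ∈ range (m + 1), ((m * K ^ 2) ^ L * (Ω / n ^ (L + 1)) : ℝ) := by
        simp only [sum_const, card_univ, hpaths, nsmul_eq_mul]
        push_cast
        exact mul_le_mul_of_nonneg_right hpairs (sum_nonneg fun _ _ => by positivity)
    _ = Ω * (K ^ 2 / n) * ∑ L ∈ range (m + 1), ((m * K ^ 2 : ℝ) / n) ^ L := by
        rw [mul_sum, mul_sum]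
        refine sum_congr rfl fun L _ => ?_
        rw [div_pow, pow_succ]
        field_simp
        ring

theorem card_onCycle_div_card_le {q : ℝ} (hn : 0 < n) (hq : q < 1)
    (hmq : (m * K ^ 2 : ℝ) ≤ q * n) (j : Fin m) :
    (#{ω : LPInst K N n m | OnCycle ω.var univ j} : ℝ) / Fintype.card (LPInst K N n m) ≤
      K ^ 2 / n / (1 - q) := by
  have hr : (m * K ^ 2 : ℝ) / n ≤ q := (div_le_iff₀ (by positivity)).2 hmq
  refine div_le_of_le_mul₀ (Nat.cast_nonneg _) (div_nonneg (by positivity) (by linarith)) ?_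
  have hgeom := geom_sum_Ico_le_of_lt_one (m := 0) (n := m + 1) (by positivity) (hr.trans_lt hq)
  rw [← range_eq_Ico, pow_zero] at hgeom
  calc (#{ω : LPInst K N n m | OnCycle ω.var univ j} : ℝ)
      ≤ Fintype.card (LPInst K N n m) * (K ^ 2 / n) *
          ∑ L ∈ range (m + 1), ((m * K ^ 2 : ℝ) / n) ^ L := card_onCycle_le hn j
    _ ≤ Fintype.card (LPInst K N n m) * (K ^ 2 / n) * (1 / (1 - q)) := by
        gcongr
        exact hgeom.trans (by gcongr)
    _ = K ^ 2 / n / (1 - q) * Fintype.card (LPInst K N n m) := by ring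

theorem integral_uniformOn_univ {Ω : Type*} [Fintype Ω] [MeasurableSpace Ω]
    [MeasurableSingletonClass Ω] (g : Ω → ℝ) :
    ∫ ω, g ω ∂uniformOn Set.univ = (∑ ω, g ω) / Fintype.card Ω := by
  rw [uniformOn, ProbabilityTheory.cond, Measure.restrict_univ, integral_smul_measure,
    integral_count, Measure.count_univ]
  simp [div_eq_inv_mul]

theorem integral_lpval_le_sum_card_onCycle (hK : 0 < K) (hB : B1 ≤ B2)
    (hA : ConditionA A bv B1 B2) (hD0 : 0 ≤ D) (hD : IsViolationBound A bv B1 B2 D) :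
    ∫ ω, LPval A bv B1 B2 ω ∂lpMeasure K N n m ≤
      D * ∑ j : Fin m,
        (#{ω : LPInst K N n m | OnCycle ω.var univ j} : ℝ) / Fintype.card (LPInst K N n m) := by
  rw [lpMeasure, integral_uniformOn_univ, ← sum_div, ← mul_div_assoc]
  gcongr
  calc ∑ ω, LPval A bv B1 B2 ω
      ≤ ∑ ω : LPInst K N n m, D * #{j | OnCycle ω.var univ j} :=
        sum_le_sum fun ω _ => lpval_le_mul_card_onCycle hK hB hA hD0 hD ω
    _ = D * ∑ j : Fin m, (#{ω : LPInst K N n m | OnCycle ω.var univ j} : ℝ) := by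
        rw [← mul_sum]
        simp only [card_filter]
        push_cast
        rw [sum_comm]

theorem integral_lpval_le_of_mul_sq_le (hK : 0 < K) (hB : B1 ≤ B2)
    (hA : ConditionA A bv B1 B2) (hD0 : 0 ≤ D) (hD : IsViolationBound A bv B1 B2 D)
    {q : ℝ} (hq0 : 0 ≤ q) (hq : q < 1) (hmq : (m * K ^ 2 : ℝ) ≤ q * n) :
    ∫ ω, LPval A bv B1 B2 ω ∂lpMeasure K N n m ≤ D * (q / (1 - q)) := by
  have hmn : (m : ℝ) * K ^ 2 / n ≤ q := by
    rcases n.eq_zero_or_pos with rfl | hn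
    · simpa using hq0
    exact (div_le_iff₀ (by positivity)).2 hmq
  calc ∫ ω, LPval A bv B1 B2 ω ∂lpMeasure K N n m
      ≤ D * ∑ j : Fin m, (#{ω : LPInst K N n m | OnCycle ω.var univ j} : ℝ) /
          Fintype.card (LPInst K N n m) := integral_lpval_le_sum_card_onCycle hK hB hA hD0 hD
    _ ≤ D * ∑ _j : Fin m, (K ^ 2 / n / (1 - q) : ℝ) := by
        refine mul_le_mul_of_nonneg_left (sum_le_sum fun j _ => ?_) hD0
        refine card_onCycle_div_card_le (Nat.pos_of_ne_zero fun hn => ?_) hq hmq j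
        have : (0 : ℝ) < m * K ^ 2 := by have := j.pos; positivity
        simp [hn] at hmq
        linarith
    _ = D * ((m * K ^ 2 / n) / (1 - q)) := by
        rw [sum_const, card_univ, Fintype.card_fin, nsmul_eq_mul]
        ring
    _ ≤ D * (q / (1 - q)) := by gcongr

end RandomLP

theorem lp_expectation_bounded_of_conditionA_general
    (K N : ℕ) (hK : 2 ≤ K)
    (A : Fin N → Fin K → ℝ) (bv : Fin N → ℝ)
    (B1 B2 : ℝ) (hB : B1 ≤ B2)
    (hA : ConditionA A bv B1 B2)
    (c : ℝ) (hc : 0 < c) (hcK : c < 1 / (K : ℝ) ^ 2) :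
    ∃ C : ℝ, ∀ n : ℕ,
      ∫ ω, LPval A bv B1 B2 ω ∂(lpMeasure K N n ⌊c * n⌋₊) ≤ C := by
  obtain ⟨D, hD0, hD⟩ := exists_isViolationBound A bv B1 B2
  have hcK' : c * K ^ 2 < 1 := by rwa [lt_div_iff₀ (by positivity)] at hcK
  refine ⟨D * (c * K ^ 2 / (1 - c * K ^ 2)), fun n => ?_⟩
  have hm : (⌊c * n⌋₊ : ℝ) ≤ c * n := Nat.floor_le (by positivity)
  exact integral_lpval_le_of_mul_sq_le (by omega) hB hA hD0 hD (by positivity) hcK'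
    (by nlinarith [sq_nonneg (K : ℝ)])

/-- **Under Condition 𝒜, for `c < 1/K²` the expected optimal value is `O(1)`:**
`sup_n E[LP(n,c)] < ∞`. -/
theorem lp_expectation_bounded_of_conditionA
    (K N : ℕ) (hK : 2 ≤ K) (hN : 1 ≤ N)
    (A : Fin N → Fin K → ℝ) (bv : Fin N → ℝ)
    (B1 B2 : ℝ) (hB : B1 ≤ B2)
    (hA : ConditionA A bv B1 B2)
    (c : ℝ) (hc : 0 < c) (hcK : c < 1 / (K : ℝ) ^ 2) :
    ∃ C : ℝ, ∀ n : ℕ,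
      ∫ ω, LPval A bv B1 B2 ω ∂(lpMeasure K N n ⌊c * n⌋₊) ≤ C :=
  lp_expectation_bounded_of_conditionA_general K N hK A bv B1 B2 hB hA c hc hcK
end
end

section
/- For every fixed integer r ≥ 1, the expected number of cycles of length r in the random K-LSAT instance is asymptotically at most (K²c)^r; that is, limsup_{n→∞} E[number of cycles of length r] ≤ (K²c)^r. -/
open MeasureTheory ProbabilityTheory Filter

noncomputable section

/-- The sample space for the combinatorial structure of a random K-LSAT instance with `n`
variables and `m` constraints: for each constraint, the ordered `K`-tuple of chosen variables.
The instance is chosen uniformly at random, i.e. the tuples are uniform and independent. -/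
abbrev KInst (K n m : ℕ) : Type := Fin m → Fin K → Fin n

/-- The uniform law of a random K-LSAT instance. -/
def kMeasure (K n m : ℕ) : Measure (KInst K n m) :=
  uniformOn (Set.univ : Set (KInst K n m))

/-- Constraint `j` contains variable `x`. -/
def ContainsVar {K n m : ℕ} (ω : KInst K n m) (j : Fin m) (x : Fin n) : Prop :=
  ∃ k : Fin K, ω j k = x

/-- Two constraints share at least one variable. -/
def Shares {K n m : ℕ} (ω : KInst K n m) (j j' : Fin m) : Prop :=
  ∃ x : Fin n, ContainsVar ω j x ∧ ContainsVar ω j' x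

/-- A cycle of length `r` in the instance `ω`: distinct constraints `p 0, …, p (r−1)` arranged
cyclically, together with distinct variables `x 0, …, x (r−1)` such that `x j` is shared by the
consecutive constraints `p j` and `p (j+1 mod r)` (occurring in two different slots when these
two constraints coincide, which happens only for `r = 1`). -/
def IsCycle {K n m : ℕ} (r : ℕ) (ω : KInst K n m)
    (p : Fin r → Fin m) (x : Fin r → Fin n) : Prop :=
  ∃ hr : 0 < r,
    Function.Injective p ∧ Function.Injective x ∧
      ∀ j : Fin r, ∃ k k' : Fin K,
        ω (p j) k = x j ∧
        ω (p ⟨((j : ℕ) + 1) % r, Nat.mod_lt _ hr⟩) k' = x j ∧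
        (p j = p ⟨((j : ℕ) + 1) % r, Nat.mod_lt _ hr⟩ → k ≠ k')

/-- The number of cycles of length `r` in the instance `ω` (counted with their cyclic
labellings). -/
def numCycles {K n m : ℕ} (r : ℕ) (ω : KInst K n m) : ℕ :=
  Nat.card {pc : (Fin r → Fin m) × (Fin r → Fin n) // IsCycle r ω pc.1 pc.2}

/-! By linearity of expectation, the expected number of cycles is the sum, over the at most
`m ^ r * n ^ r` labelled candidates `(p, x)`, of the probability that `(p, x)` is a cycle.
Being a cycle pins `2 r` pairwise distinct slots of the instance to prescribed variables; there
are at most `K ^ (2 r)` ways to choose these slots, and each choice is realised with probability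
`n ^ (-2 r)`. So the expectation is at most `(K² m / n) ^ r ≤ (K² c) ^ r` for every `n ≥ 1`. -/

open Finset

theorem integral_uniformOn_univ_s6 {α : Type*} [Fintype α] [MeasurableSpace α]
    [MeasurableSingletonClass α] (f : α → ℝ) :
    ∫ x, f x ∂uniformOn (Set.univ : Set α) = (Fintype.card α : ℝ)⁻¹ * ∑ x, f x := by
  simp [uniformOn, ProbabilityTheory.cond, integral_smul_measure, Measure.count_univ]

theorem card_filter_comp_eq_mul_pow_le {ι α β : Type*} [Fintype ι] [Fintype α] [DecidableEq α]
    [Fintype β] [DecidableEq β] {e : ι → α} (he : Function.Injective e) (y : ι → β) :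
    #{f : α → β | f ∘ e = y} * Fintype.card β ^ Fintype.card ι ≤
      Fintype.card β ^ Fintype.card α := by
  have hrestrict : #{f : α → β | f ∘ e = y} ≤
      Fintype.card ({a // a ∉ Set.range e} → β) := by
    rw [← card_univ]
    refine card_le_card_of_injOn (fun f a => f a) (fun _ _ => mem_univ _) ?_
    intro f hf g hg hfg
    simp only [coe_filter, mem_univ, true_and, Set.mem_ofPred_eq] at hf hg
    funext a
    by_cases ha : a ∈ Set.range e
    · obtain ⟨i, rfl⟩ := ha
      exact (congrFun hf i).trans (congrFun hg i).symm
    · exact congrFun hfg ⟨a, ha⟩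
  have hsplit : Fintype.card {a // a ∉ Set.range e} + Fintype.card ι = Fintype.card α := by
    rw [Fintype.card_subtype_compl, Set.card_range_of_injective he]
    have := Fintype.card_le_of_injective e he
    omega
  calc _ ≤ Fintype.card β ^ Fintype.card {a // a ∉ Set.range e} *
        Fintype.card β ^ Fintype.card ι := by
        gcongr
        simpa using hrestrict
    _ = _ := by rw [← pow_add, hsplit]

section Cycles

variable {K n m r : ℕ}

theorem finRotate_eq_mk_mod (hr : 0 < r) (j : Fin r) :
    finRotate r j = ⟨(j + 1) % r, Nat.mod_lt _ hr⟩ := by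
  have := NeZero.of_pos hr
  ext
  rw [finRotate_apply, Fin.val_add, Fin.val_one', Nat.add_mod_mod]

/-- The `2r` slots of an instance read by a cycle through the constraints `p`, where `κ j`
gives the slots of `x j` in `p j` and in its cyclic successor. -/
def cycleSlots (p : Fin r → Fin m) (κ : Fin r → Fin K × Fin K) :
    Fin r ⊕ Fin r → Fin m × Fin K :=
  Sum.elim (fun j => (p j, (κ j).1)) (fun j => (p (finRotate r j), (κ j).2))

theorem IsCycle.exists_injective_cycleSlots {ω : KInst K n m} {p : Fin r → Fin m}
    {x : Fin r → Fin n} (h : IsCycle r ω p x) :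
    ∃ κ, Function.Injective (cycleSlots p κ) ∧
      Function.uncurry ω ∘ cycleSlots p κ = Sum.elim x x := by
  obtain ⟨hr, hp, hx, h⟩ := h
  simp only [← finRotate_eq_mk_mod hr] at h
  choose k k' hk hk' hkk' using h
  have hω : Function.uncurry ω ∘ cycleSlots p (fun j => (k j, k' j)) = Sum.elim x x := by
    funext j
    rcases j with j | j
    exacts [hk j, hk' j]
  refine ⟨fun j => (k j, k' j), fun a b hab => ?_, hω⟩
  have hxab : Sum.elim x x a = Sum.elim x x b := by
    rw [← hω, Function.comp_apply, Function.comp_apply, hab]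
  rcases a with i | i <;> rcases b with j | j <;>
    simp only [cycleSlots, Sum.elim_inl, Sum.elim_inr, Prod.mk.injEq] at hab hxab
  · rw [hp hab.1]
  · cases hx hxab
    exact absurd hab.2 (hkk' i hab.1)
  · cases hx hxab
    exact absurd hab.2.symm (hkk' i hab.1.symm)
  · rw [(finRotate r).injective (hp hab.1)]

theorem card_filter_uncurry_comp_eq_mul_le {ι : Type*} [Fintype ι] {g : ι → Fin m × Fin K}
    (hg : Function.Injective g) (v : ι → Fin n) :
    #{ω : KInst K n m | Function.uncurry ω ∘ g = v} * n ^ Fintype.card ι ≤ n ^ (m * K) := by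
  have hcurry : #{ω : KInst K n m | Function.uncurry ω ∘ g = v} = #{f | f ∘ g = v} :=
    card_equiv (Equiv.curry _ _ _).symm (by simp)
  simpa [hcurry] using card_filter_comp_eq_mul_pow_le hg v

open scoped Classical in
theorem card_filter_isCycle_mul_le (p : Fin r → Fin m) (x : Fin r → Fin n) :
    #{ω : KInst K n m | IsCycle r ω p x} * n ^ (2 * r) ≤ K ^ (2 * r) * n ^ (m * K) := by
  set G := ({κ | Function.Injective (cycleSlots p κ)} : Finset (Fin r → Fin K × Fin K))
  have hcover : ({ω | IsCycle r ω p x} : Finset (KInst K n m)) ⊆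
      G.biUnion fun κ => {ω | Function.uncurry ω ∘ cycleSlots p κ = Sum.elim x x} := by
    intro ω hω
    obtain ⟨κ, hκ, hω⟩ := (mem_filter.1 hω).2.exists_injective_cycleSlots
    exact mem_biUnion.2 ⟨κ, by simpa [G] using hκ, by simpa using hω⟩
  calc #{ω : KInst K n m | IsCycle r ω p x} * n ^ (2 * r)
      ≤ (∑ κ ∈ G, #{ω : KInst K n m | Function.uncurry ω ∘ cycleSlots p κ = Sum.elim x x}) *
          n ^ (2 * r) := by
        gcongr
        exact (card_le_card hcover).trans card_biUnion_le
    _ ≤ ∑ _κ ∈ G, n ^ (m * K) := by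
        rw [sum_mul]
        gcongr with κ hκ
        simpa [two_mul] using
          card_filter_uncurry_comp_eq_mul_le (mem_filter.1 hκ).2 (Sum.elim x x)
    _ ≤ K ^ (2 * r) * n ^ (m * K) := by
        rw [sum_const, smul_eq_mul]
        gcongr
        simpa [pow_mul, ← sq] using card_le_univ G

open scoped Classical in
theorem numCycles_eq_card_filter (ω : KInst K n m) :
    numCycles r ω = #{pc : (Fin r → Fin m) × (Fin r → Fin n) | IsCycle r ω pc.1 pc.2} := by
  rw [numCycles, Nat.card_eq_fintype_card, Fintype.card_subtype]

theorem sum_numCycles_mul_le :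
    (∑ ω : KInst K n m, numCycles r ω) * n ^ (2 * r) ≤
      m ^ r * n ^ r * (K ^ (2 * r) * n ^ (m * K)) := by
  classical
  calc (∑ ω : KInst K n m, numCycles r ω) * n ^ (2 * r)
      = ∑ pc : (Fin r → Fin m) × (Fin r → Fin n),
          #{ω : KInst K n m | IsCycle r ω pc.1 pc.2} * n ^ (2 * r) := by
        simp only [numCycles_eq_card_filter, ← sum_mul]
        congr 1
        exact sum_card_bipartiteAbove_eq_sum_card_bipartiteBelow _
    _ ≤ ∑ _pc : (Fin r → Fin m) × (Fin r → Fin n), K ^ (2 * r) * n ^ (m * K) :=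
        sum_le_sum fun pc _ ↦ card_filter_isCycle_mul_le pc.1 pc.2
    _ = m ^ r * n ^ r * (K ^ (2 * r) * n ^ (m * K)) := by
        simp [card_univ]

theorem integral_numCycles_le (hn : 0 < n) :
    ∫ ω, (numCycles r ω : ℝ) ∂kMeasure K n m ≤ ((K : ℝ) ^ 2 * (m / n)) ^ r := by
  have hsum : (∑ ω : KInst K n m, (numCycles r ω : ℝ)) * (n : ℝ) ^ (2 * r) ≤
      (m : ℝ) ^ r * (n : ℝ) ^ r * ((K : ℝ) ^ (2 * r) * (n : ℝ) ^ (m * K)) := by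
    exact_mod_cast sum_numCycles_mul_le
  have hcard : (Fintype.card (KInst K n m) : ℝ) = (n : ℝ) ^ (m * K) := by
    simp [← pow_mul, mul_comm]
  rw [kMeasure, integral_uniformOn_univ_s6, hcard, inv_mul_le_iff₀ (by positivity)]
  refine le_of_mul_le_mul_right (hsum.trans_eq ?_) (by positivity : (0 : ℝ) < n ^ (2 * r))
  rw [mul_pow, div_pow, ← pow_mul, two_mul, pow_add]
  field_simp
  ring

end Cycles

theorem expected_cycles_le_general
    (K : ℕ) (c : ℝ) (hc : 0 < c) (r : ℕ) :
    Filter.limsup (fun n : ℕ =>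
        ∫ ω, (numCycles r ω : ℝ) ∂(kMeasure K n ⌊c * n⌋₊)) atTop ≤
      ((K : ℝ) ^ 2 * c) ^ r := by
  refine limsup_le_of_le (isCoboundedUnder_le_of_le atTop fun _ ↦
    integral_nonneg fun _ ↦ Nat.cast_nonneg _) ?_
  filter_upwards [eventually_gt_atTop 0] with n hn
  calc ∫ ω, (numCycles r ω : ℝ) ∂kMeasure K n ⌊c * n⌋₊
      ≤ ((K : ℝ) ^ 2 * (⌊c * n⌋₊ / n)) ^ r := integral_numCycles_le hn
    _ ≤ ((K : ℝ) ^ 2 * c) ^ r := by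
        gcongr
        rw [div_le_iff₀ (by positivity)]
        exact Nat.floor_le (by positivity)

/-- **Expected number of cycles of length `r`.**
For every fixed `r ≥ 1`, the expected number of cycles of length `r` in the random K-LSAT
instance with `m = ⌊cn⌋` constraints is asymptotically at most `(K²c)^r`. -/
theorem expected_cycles_le
    (K : ℕ) (hK : 2 ≤ K) (c : ℝ) (hc : 0 < c) (r : ℕ) (hr : 1 ≤ r) :
    Filter.limsup (fun n : ℕ =>
        ∫ ω, (numCycles r ω : ℝ) ∂(kMeasure K n ⌊c * n⌋₊)) atTop ≤
      ((K : ℝ) ^ 2 * c) ^ r :=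
  expected_cycles_le_general K c hc r
end
end

section
/- Let G be a finite weighted graph with edge weights 0 ≤ w_{ij} ≤ w_max, let b ≥ 1 be an integer, and let d ≥ 3. Let M(d) denote the total number of edges of G that lie on at least one cycle of length less than d. Then ((d−1)/d)·(LPM⁰(G) − M(d)·w_max) ≤ LPM(G) ≤ LPM⁰(G). -/
/-!
Take `x` feasible for `LPM⁰`, set it to zero on the `M(d)` edges lying on cycles shorter than `d`
(this loses at most `M(d)·w_max`) and scale it by `(d-1)/d`. The result is feasible for `LPM`.
An odd-set constraint with `k = b|V| + |A| ≥ d` holds because the degree constraints alone give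
`x(E(V)) + x(A) ≤ k/2`, and `(d-1)/d · k/2 ≤ (k-1)/2`. If `k < d`, then `|V| < d`, so the
surviving edges inside `V` form a forest. On a forest with pendant edges `A` the fractional value
is at most the size of some integral `b`-matching `F` (peel off leaves), and counting the
endpoints of `F` in `V` gives `2|F| ≤ k - 1`.
-/

open Finset

noncomputable section
open scoped Classical

/-- The optimal value `LPM⁰(G)` of the degree-constrained fractional `b`-matching linear program:
maximize `Σ_e w_e x_e` subject to `Σ_{e ∋ i} x_e ≤ b` for every vertex `i` and `0 ≤ x_e ≤ 1`
for every edge `e`. -/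
def LPM0 {n : ℕ} (G : SimpleGraph (Fin n)) [DecidableRel G.Adj]
    (w : Sym2 (Fin n) → ℝ) (b : ℕ) : ℝ :=
  sSup { v : ℝ | ∃ x : Sym2 (Fin n) → ℝ,
    (∀ e ∈ G.edgeFinset, 0 ≤ x e ∧ x e ≤ 1) ∧
    (∀ i : Fin n, ∑ e ∈ G.edgeFinset.filter (fun e => i ∈ e), x e ≤ (b : ℝ)) ∧
    v = ∑ e ∈ G.edgeFinset, w e * x e }

/-- The optimal value `LPM(G)` of the fractional `b`-matching linear program with odd-set
constraints: in addition to the constraints of `LPM⁰`, for every vertex set `V` and every set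
`A` of edges with exactly one endpoint in `V` such that `b|V| + |A|` is odd, one requires
`Σ_{e ⊆ V} x_e + Σ_{e ∈ A} x_e ≤ (b|V| + |A| − 1)/2`. -/
def LPM {n : ℕ} (G : SimpleGraph (Fin n)) [DecidableRel G.Adj]
    (w : Sym2 (Fin n) → ℝ) (b : ℕ) : ℝ :=
  sSup { v : ℝ | ∃ x : Sym2 (Fin n) → ℝ,
    (∀ e ∈ G.edgeFinset, 0 ≤ x e ∧ x e ≤ 1) ∧
    (∀ i : Fin n, ∑ e ∈ G.edgeFinset.filter (fun e => i ∈ e), x e ≤ (b : ℝ)) ∧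
    (∀ (V : Finset (Fin n)) (A : Finset (Sym2 (Fin n))),
      A ⊆ G.edgeFinset.filter (fun e => ∃ u v', e = s(u, v') ∧ u ∈ V ∧ v' ∉ V) →
      Odd (b * V.card + A.card) →
      ∑ e ∈ G.edgeFinset.filter (fun e => ∀ a ∈ e, a ∈ V), x e + ∑ e ∈ A, x e ≤
        ((b * V.card + A.card : ℕ) - 1 : ℝ) / 2) ∧
    v = ∑ e ∈ G.edgeFinset, w e * x e }

/-- The number of edges of `G` lying on at least one cycle of length less than `d`. -/
def edgesOnShortCycles {n : ℕ} (G : SimpleGraph (Fin n)) (d : ℕ) : ℕ :=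
  Nat.card {e : Sym2 (Fin n) //
    ∃ (u : Fin n) (p : G.Walk u u), p.IsCycle ∧ p.length < d ∧ e ∈ p.edges}

section BMatching

variable {α : Type*}

theorem disjoint_of_forall_mem_of_crossing {V : Finset α} {I A : Finset (Sym2 α)}
    (hI : ∀ e ∈ I, ∀ a ∈ e, a ∈ V) (hA : ∀ e ∈ A, ∃ u w, e = s(u, w) ∧ u ∈ V ∧ w ∉ V) :
    Disjoint I A :=
  disjoint_left.mpr fun e heI heA => by
    obtain ⟨u, w, rfl, -, hw⟩ := hA e heA
    exact hw (hI _ heI w (Sym2.mem_mk_right u w))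

variable [DecidableEq α]

def IsBMatchingOn (b : ℕ) (V : Finset α) (F : Finset (Sym2 α)) : Prop :=
  ∀ v ∈ V, #{e ∈ F | v ∈ e} ≤ b

/-- For edges without loops this says that the edges of `E` inside `V` form a forest. -/
def OneDegenerateOn (V : Finset α) (E : Finset (Sym2 α)) : Prop :=
  ∀ V₀ ⊆ V, V₀.Nonempty → ∃ v ∈ V₀, #{e ∈ E | v ∈ e ∧ ∀ a ∈ e, a ∈ V₀} ≤ 1

def BMatchingDominates (b : ℕ) (V : Finset α) (x : Sym2 α → ℝ) (E : Finset (Sym2 α)) : Prop :=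
  ∃ F ⊆ E, IsBMatchingOn b V F ∧ ∑ e ∈ E, x e ≤ #F

variable {b : ℕ} {V V' : Finset α} {E E' F X : Finset (Sym2 α)} {x : Sym2 α → ℝ} {v : α}

theorem forall_mem_of_mem_erase {e : Sym2 α} {a : α} (hvV : v ∈ V) (hve : v ∈ e) (hae : a ∈ e)
    (ha : a ∈ V.erase v) : ∀ c ∈ e, c ∈ V := by
  have hev := (Sym2.mem_and_mem_iff (mem_erase.mp ha).1.symm).mp ⟨hve, hae⟩
  intro c hc
  rcases Sym2.mem_iff.mp (hev ▸ hc) with rfl | rfl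
  exacts [hvV, mem_of_mem_erase ha]

theorem OneDegenerateOn.mono (h : OneDegenerateOn V E) (hV : V' ⊆ V)
    (hE : ∀ e ∈ E', (∀ a ∈ e, a ∈ V') → e ∈ E) : OneDegenerateOn V' E' := by
  intro V₀ hV₀ hne
  obtain ⟨v, hv, hcard⟩ := h V₀ (hV₀.trans hV) hne
  refine ⟨v, hv, le_trans (card_le_card fun e he => ?_) hcard⟩
  simp only [mem_filter] at he ⊢
  exact ⟨hE e he.1 fun a ha => hV₀ (he.2.2 a ha), he.2⟩

theorem IsBMatchingOn.union_of_erase (hF : IsBMatchingOn b (V.erase v) F)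
    (hX : ∀ e ∈ X, ∀ a ∈ e, a ∉ V.erase v) (hv : #{e ∈ F ∪ X | v ∈ e} ≤ b) :
    IsBMatchingOn b V (F ∪ X) := by
  intro u hu
  by_cases huv : u = v
  · exact huv ▸ hv
  have hu' : u ∈ V.erase v := mem_erase.mpr ⟨huv, hu⟩
  rw [filter_union, filter_false_of_mem fun e he hue => hX e he u hue hu', union_empty]
  exact hF u hu'

/-- Peeling a vertex of low degree: its edges not reaching the rest of `V` all join `F`. -/
theorem BMatchingDominates.of_erase_of_card_le (hx : ∀ e ∈ E, x e ≤ 1)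
    (hv : #{e ∈ E | v ∈ e} ≤ b)
    (h : BMatchingDominates b (V.erase v) x {e ∈ E | ∃ a ∈ e, a ∈ V.erase v}) :
    BMatchingDominates b V x E := by
  obtain ⟨F, hFE, hF, hsum⟩ := h
  set P := {e ∈ E | ¬ ∃ a ∈ e, a ∈ V.erase v}
  have hdisj : Disjoint F P := (disjoint_filter_filter_not E E _).mono_left hFE
  refine ⟨F ∪ P, union_subset (hFE.trans (filter_subset _ _)) (filter_subset _ _),
    hF.union_of_erase (fun e he a ha ha' => (mem_filter.mp he).2 ⟨a, ha, ha'⟩) ?_, ?_⟩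
  · refine le_trans (card_le_card fun e he => ?_) hv
    simp only [mem_filter, mem_union] at he ⊢
    exact ⟨he.1.elim (fun h => (mem_filter.mp (hFE h)).1) fun h => (mem_filter.mp h).1, he.2⟩
  · have hP : ∑ e ∈ P, x e ≤ #P := by
      simpa using sum_le_card_nsmul P x 1 fun e he => hx e (mem_filter.mp he).1
    rw [← sum_filter_add_sum_filter_not E (fun e => ∃ a ∈ e, a ∈ V.erase v),
      card_union_of_disjoint hdisj]
    push_cast
    linarith

/-- Peeling a vertex with at least `b` pendant edges: `b` of them join `F`, the rest are dropped. -/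
theorem BMatchingDominates.of_erase_of_saturated {B : Finset (Sym2 α)}
    (hv : ∑ e ∈ E with v ∈ e, x e ≤ b) (hBE : B ⊆ {e ∈ E | v ∈ e})
    (hBV : ∀ e ∈ B, ∀ a ∈ e, a ∉ V.erase v) (hB : #B = b)
    (h : BMatchingDominates b (V.erase v) x {e ∈ E | v ∉ e}) :
    BMatchingDominates b V x E := by
  obtain ⟨F, hFE, hF, hsum⟩ := h
  have hdisj : Disjoint F B :=
    (disjoint_filter_filter_not E E _).symm.mono hFE hBE
  refine ⟨F ∪ B, union_subset (hFE.trans (filter_subset _ _)) (hBE.trans (filter_subset _ _)),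
    hF.union_of_erase hBV ?_, ?_⟩
  · refine le_trans (card_le_card fun e he => ?_) hB.le
    simp only [mem_filter, mem_union] at he
    exact he.1.resolve_left fun h => (mem_filter.mp (hFE h)).2 he.2
  · rw [← sum_filter_add_sum_filter_not E (fun e => v ∈ e), card_union_of_disjoint hdisj, hB]
    push_cast
    linarith

theorem bMatchingDominates_of_oneDegenerateOn (hx : ∀ e ∈ E, 0 ≤ x e ∧ x e ≤ 1)
    (hdeg : ∀ v ∈ V, ∑ e ∈ E with v ∈ e, x e ≤ b) (hEV : ∀ e ∈ E, ∃ v ∈ V, v ∈ e)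
    (hE : OneDegenerateOn V E) : BMatchingDominates b V x E := by
  induction V using Finset.strongInduction generalizing E with
  | H V ih =>
  rcases V.eq_empty_or_nonempty with rfl | hV
  · obtain rfl : E = ∅ := eq_empty_of_forall_notMem fun e he => by simpa using hEV e he
    exact ⟨∅, Subset.rfl, fun v hv => absurd hv (notMem_empty v), by simp⟩
  obtain ⟨v, hvV, hvE⟩ := hE V Subset.rfl hV
  have hdeg' : ∀ E' ⊆ E, ∀ u ∈ V.erase v, ∑ e ∈ E' with u ∈ e, x e ≤ b := fun E' hE' u hu =>
    le_trans (sum_le_sum_of_subset_of_nonneg (filter_subset_filter _ hE')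
      fun e he _ => (hx e (mem_filter.mp he).1).1) (hdeg u (mem_of_mem_erase hu))
  set P := {e ∈ E | ¬ ∃ a ∈ e, a ∈ V.erase v}
  have hPv : ∀ e ∈ P, v ∈ e := by
    intro e he
    obtain ⟨a, haV, hae⟩ := hEV e (mem_filter.mp he).1
    by_contra hve
    exact (mem_filter.mp he).2 ⟨a, hae, mem_erase.mpr ⟨fun h => hve (h ▸ hae), haV⟩⟩
  by_cases hbP : b ≤ #P
  · obtain ⟨B, hBP, hB⟩ := exists_subset_card_eq hbP
    refine .of_erase_of_saturated (hdeg v hvV)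
      (fun e he => mem_filter.mpr ⟨(mem_filter.mp (hBP he)).1, hPv e (hBP he)⟩)
      (fun e he a ha ha' => (mem_filter.mp (hBP he)).2 ⟨a, ha, ha'⟩) hB
      (ih _ (erase_ssubset hvV) (fun e he => hx e (mem_filter.mp he).1)
        (hdeg' _ (filter_subset _ _)) ?_ (hE.mono (erase_subset v V)
          fun e he _ => (mem_filter.mp he).1))
    intro e he
    obtain ⟨a, haV, hae⟩ := hEV e (mem_filter.mp he).1
    exact ⟨a, mem_erase.mpr ⟨fun h => (mem_filter.mp he).2 (h ▸ hae), haV⟩, hae⟩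
  · have hvb : #{e ∈ E | v ∈ e} ≤ b := by
      have : {e ∈ E | v ∈ e} ⊆ P ∪ {e ∈ E | v ∈ e ∧ ∀ a ∈ e, a ∈ V} := by
        intro e he
        rw [mem_filter] at he
        rw [mem_union, mem_filter, mem_filter]
        by_cases hP : ∃ a ∈ e, a ∈ V.erase v
        · obtain ⟨a, hae, ha⟩ := hP
          exact Or.inr ⟨he.1, he.2, forall_mem_of_mem_erase hvV he.2 hae ha⟩
        · exact Or.inl ⟨he.1, hP⟩
      have := (card_le_card this).trans (card_union_le _ _)
      omega
    exact .of_erase_of_card_le (fun e he => (hx e he).2) hvb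
      (ih _ (erase_ssubset hvV) (fun e he => hx e (mem_filter.mp he).1)
        (hdeg' _ (filter_subset _ _))
        (fun e he => (mem_filter.mp he).2.imp fun a h => ⟨h.2, h.1⟩)
        (hE.mono (erase_subset v V) fun e he _ => (mem_filter.mp he).1))

theorem card_filter_mem_of_not_isDiag {e : Sym2 α} (he : ¬ e.IsDiag) (heV : ∀ a ∈ e, a ∈ V) :
    #{v ∈ V | v ∈ e} = 2 := by
  rw [← Sym2.card_toFinset_of_not_isDiag e he]
  congr 1
  ext a
  simp only [mem_filter, Sym2.mem_toFinset]
  exact ⟨And.right, fun ha => ⟨heV a ha, ha⟩⟩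

theorem card_filter_mem_mk_of_mem_of_notMem {u w : α} (hu : u ∈ V) (hw : w ∉ V) :
    #{v ∈ V | v ∈ s(u, w)} = 1 := by
  rw [card_eq_one]
  refine ⟨u, eq_singleton_iff_unique_mem.mpr ⟨by simp [hu], fun a ha => ?_⟩⟩
  simp only [mem_filter, Sym2.mem_iff] at ha
  rcases ha with ⟨_, rfl | rfl⟩
  · rfl
  · contradiction

theorem sum_card_filter_mem_mul_le (hdeg : ∀ v ∈ V, ∑ e ∈ E with v ∈ e, x e ≤ b) :
    ∑ e ∈ E, (#{v ∈ V | v ∈ e} : ℝ) * x e ≤ b * #V := by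
  calc ∑ e ∈ E, (#{v ∈ V | v ∈ e} : ℝ) * x e = ∑ v ∈ V, ∑ e ∈ E with v ∈ e, x e := by
        simp_rw [sum_filter, card_filter, Nat.cast_sum, sum_mul]
        rw [sum_comm]
        simp
    _ ≤ ∑ _v ∈ V, (b : ℝ) := sum_le_sum hdeg
    _ = b * #V := by simp [mul_comm]

/-- Double counting of the endpoints in `V` of the edges inside `V` and of those leaving it. -/
theorem two_mul_sum_add_sum_le {I A : Finset (Sym2 α)} (hx0 : ∀ e ∈ E, 0 ≤ x e)
    (hdeg : ∀ v ∈ V, ∑ e ∈ E with v ∈ e, x e ≤ b) (hI : I ⊆ E) (hA : A ⊆ E)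
    (hIV : ∀ e ∈ I, ¬ e.IsDiag ∧ ∀ a ∈ e, a ∈ V)
    (hAV : ∀ e ∈ A, ∃ u w, e = s(u, w) ∧ u ∈ V ∧ w ∉ V) :
    2 * ∑ e ∈ I, x e + ∑ e ∈ A, x e ≤ b * #V := by
  have hIA := disjoint_of_forall_mem_of_crossing (fun e he => (hIV e he).2) hAV
  calc 2 * ∑ e ∈ I, x e + ∑ e ∈ A, x e
      = ∑ e ∈ I ∪ A, (#{v ∈ V | v ∈ e} : ℝ) * x e := by
        rw [sum_union hIA, mul_sum]
        congr 1
        · refine sum_congr rfl fun e he => ?_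
          rw [card_filter_mem_of_not_isDiag (hIV e he).1 (hIV e he).2]
          norm_num
        · refine sum_congr rfl fun e he => ?_
          obtain ⟨u, w, rfl, hu, hw⟩ := hAV e he
          rw [card_filter_mem_mk_of_mem_of_notMem hu hw]
          norm_num
    _ ≤ ∑ e ∈ E, (#{v ∈ V | v ∈ e} : ℝ) * x e :=
        sum_le_sum_of_subset_of_nonneg (union_subset hI hA) fun e he _ =>
          mul_nonneg (Nat.cast_nonneg _) (hx0 e he)
    _ ≤ b * #V := sum_card_filter_mem_mul_le hdeg

theorem IsBMatchingOn.two_mul_card_add_one_le {I A : Finset (Sym2 α)} (hF : IsBMatchingOn b V F)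
    (hFIA : F ⊆ I ∪ A) (hIV : ∀ e ∈ I, ¬ e.IsDiag ∧ ∀ a ∈ e, a ∈ V)
    (hAV : ∀ e ∈ A, ∃ u w, e = s(u, w) ∧ u ∈ V ∧ w ∉ V) (hodd : Odd (b * #V + #A)) :
    2 * #F + 1 ≤ b * #V + #A := by
  have hcount := two_mul_sum_add_sum_le (x := fun _ => (1 : ℝ)) (E := F) (I := F ∩ I)
    (A := F ∩ A) (fun _ _ => zero_le_one) (fun v hv => by simpa using hF v hv) inter_subset_left
    inter_subset_left (fun e he => hIV e (mem_inter.mp he).2)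
    (fun e he => hAV e (mem_inter.mp he).2)
  have hsplit : #F ≤ #(F ∩ I) + #(F ∩ A) := by
    calc #F = #(F ∩ I ∪ F ∩ A) := by rw [← inter_union_distrib_left, inter_eq_left.mpr hFIA]
      _ ≤ #(F ∩ I) + #(F ∩ A) := card_union_le _ _
  simp only [sum_const, nsmul_eq_mul, mul_one] at hcount
  have : 2 * #(F ∩ I) + #(F ∩ A) ≤ b * #V := by exact_mod_cast hcount
  have := card_le_card (inter_subset_right (s₁ := F) (s₂ := A))
  obtain ⟨j, hj⟩ := hodd
  omega

theorem oddSetConstraint_of_oneDegenerateOn {I A : Finset (Sym2 α)}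
    (hx : ∀ e ∈ I ∪ A, 0 ≤ x e ∧ x e ≤ 1) (hdeg : ∀ v ∈ V, ∑ e ∈ I ∪ A with v ∈ e, x e ≤ b)
    (hIV : ∀ e ∈ I, ¬ e.IsDiag ∧ ∀ a ∈ e, a ∈ V)
    (hAV : ∀ e ∈ A, ∃ u w, e = s(u, w) ∧ u ∈ V ∧ w ∉ V) (hI : OneDegenerateOn V I)
    (hodd : Odd (b * #V + #A)) :
    ∑ e ∈ I, x e + ∑ e ∈ A, x e ≤ ((b * #V + #A : ℕ) - 1 : ℝ) / 2 := by
  have hEV : ∀ e ∈ I ∪ A, ∃ v ∈ V, v ∈ e := fun e he => by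
    rcases mem_union.mp he with he | he
    · exact ⟨e.out.1, (hIV e he).2 _ (Sym2.out_fst_mem e), Sym2.out_fst_mem e⟩
    · obtain ⟨u, w, rfl, hu, -⟩ := hAV e he
      exact ⟨u, hu, Sym2.mem_mk_left u w⟩
  have hE : OneDegenerateOn V (I ∪ A) := hI.mono Subset.rfl fun e he heV => by
    refine (mem_union.mp he).resolve_right fun heA => ?_
    obtain ⟨u, w, rfl, -, hw⟩ := hAV _ heA
    exact hw (heV w (Sym2.mem_mk_right u w))
  obtain ⟨F, hFE, hF, hxF⟩ := bMatchingDominates_of_oneDegenerateOn hx hdeg hEV hE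
  have hcount : (2 * #F + 1 : ℝ) ≤ (b * #V + #A : ℕ) := by
    exact_mod_cast hF.two_mul_card_add_one_le hFE hIV hAV hodd
  rw [← sum_union (disjoint_of_forall_mem_of_crossing (fun e he => (hIV e he).2) hAV),
    le_div_iff₀ two_pos]
  linarith

end BMatching

namespace SimpleGraph

variable {V : Type*} {G : SimpleGraph V}

theorem IsAcyclic.exists_degree_le_one [Fintype V] [Nonempty V] [DecidableRel G.Adj]
    (h : G.IsAcyclic) : ∃ v, G.degree v ≤ 1 := by
  obtain ⟨u, v, p, hp, hmax⟩ := Walk.exists_isPath_forall_isPath_length_le_length G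
  have hsnd : ∀ w, G.Adj u w → w = p.snd := fun w hadj =>
    h.eq_snd_of_adj_start hp hadj <| by
      by_contra hw
      have := hmax _ _ (p.cons hadj.symm) (hp.cons hw)
      simp at this
  refine ⟨u, card_le_one.mpr fun w hw w' hw' => ?_⟩
  rw [mem_neighborFinset] at hw hw'
  rw [hsnd w hw, hsnd w' hw']

theorem Walk.IsCycle.length_le_card [Fintype V] {u : V} {p : G.Walk u u} (hp : p.IsCycle) :
    p.length ≤ Fintype.card V := by
  simpa using hp.support_nodup.length_le_card

variable (G) in
def IsOnShortCycle (d : ℕ) (e : Sym2 V) : Prop :=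
  ∃ (u : V) (p : G.Walk u u), p.IsCycle ∧ p.length < d ∧ e ∈ p.edges

theorem le_length_of_isCycle_deleteEdges_isOnShortCycle {d : ℕ} {u : V}
    {p : (G.deleteEdges {e | G.IsOnShortCycle d e}).Walk u u} (hp : p.IsCycle) : d ≤ p.length := by
  by_contra! hlen
  obtain ⟨e, he⟩ := List.exists_mem_of_ne_nil _ (p.edges_eq_nil.not.mpr hp.not_nil)
  have hshort : G.IsOnShortCycle d e :=
    ⟨u, p.mapLe (deleteEdges_le _), hp.mapLe _, by rwa [Walk.length_mapLe],
      by rwa [Walk.edges_mapLe_eq_edges]⟩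
  have := p.edges_subset_edgeSet he
  rw [edgeSet_deleteEdges] at this
  exact this.2 hshort

theorem isAcyclic_induce_deleteEdges_isOnShortCycle {d : ℕ} {s : Finset V} (hs : #s < d) :
    ((G.deleteEdges {e | G.IsOnShortCycle d e}).induce (s : Set V)).IsAcyclic := by
  intro u c hc
  have := le_length_of_isCycle_deleteEdges_isOnShortCycle
    (hc.map (f := (Embedding.induce _).toHom) Subtype.val_injective)
  have := hc.length_le_card
  rw [Walk.length_map] at *
  simp only [Finset.coe_sort_coe, Fintype.card_coe] at this
  omega

theorem oneDegenerateOn_edgeFinset_filter_not_isOnShortCycle [DecidableEq V] [Fintype G.edgeSet]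
    {d : ℕ} {s : Finset V} (hs : #s < d) :
    OneDegenerateOn s {e ∈ G.edgeFinset | ¬ G.IsOnShortCycle d e} := by
  intro V₀ hV₀ ⟨v₀, hv₀⟩
  set H := (G.deleteEdges {e | G.IsOnShortCycle d e}).induce (V₀ : Set V)
  have hH : H.IsAcyclic :=
    isAcyclic_induce_deleteEdges_isOnShortCycle ((card_le_card hV₀).trans_lt hs)
  have : Nonempty (V₀ : Set V) := ⟨⟨v₀, hv₀⟩⟩
  obtain ⟨v, hv⟩ := hH.exists_degree_le_one
  refine ⟨v, v.2, le_trans ?_ hv⟩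
  calc _ ≤ #((H.neighborFinset v).image fun w => s(v.1, w.1)) := card_le_card fun e he => ?_
    _ ≤ H.degree v := card_image_le
  simp only [mem_filter, mem_edgeFinset] at he
  obtain ⟨⟨heG, hshort⟩, hve, heV₀⟩ := he
  obtain ⟨w, rfl⟩ := Sym2.mem_iff_exists.mp hve
  refine mem_image.mpr ⟨⟨w, heV₀ w (Sym2.mem_mk_right _ _)⟩, ?_, rfl⟩
  simpa [H] using ⟨heG, hshort⟩

end SimpleGraph

section LinearProgram

variable {n : ℕ} (G : SimpleGraph (Fin n)) [DecidableRel G.Adj] (b : ℕ)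

def IsFracBMatching (x : Sym2 (Fin n) → ℝ) : Prop :=
  (∀ e ∈ G.edgeFinset, 0 ≤ x e ∧ x e ≤ 1) ∧
    ∀ i : Fin n, ∑ e ∈ G.edgeFinset.filter (fun e => i ∈ e), x e ≤ (b : ℝ)

def SatisfiesOddSetConstraints (x : Sym2 (Fin n) → ℝ) : Prop :=
  ∀ (V : Finset (Fin n)) (A : Finset (Sym2 (Fin n))),
    A ⊆ G.edgeFinset.filter (fun e => ∃ u v', e = s(u, v') ∧ u ∈ V ∧ v' ∉ V) →
    Odd (b * V.card + A.card) →
    ∑ e ∈ G.edgeFinset.filter (fun e => ∀ a ∈ e, a ∈ V), x e + ∑ e ∈ A, x e ≤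
      ((b * V.card + A.card : ℕ) - 1 : ℝ) / 2

variable {G b} (w : Sym2 (Fin n) → ℝ)

theorem LPM0_eq_sSup : LPM0 G w b =
    sSup {v | ∃ x, IsFracBMatching G b x ∧ v = ∑ e ∈ G.edgeFinset, w e * x e} := by
  simp only [LPM0, IsFracBMatching, and_assoc]

theorem LPM_eq_sSup : LPM G w b = sSup {v | ∃ x, (IsFracBMatching G b x ∧
    SatisfiesOddSetConstraints G b x) ∧ v = ∑ e ∈ G.edgeFinset, w e * x e} := by
  simp only [LPM, IsFracBMatching, SatisfiesOddSetConstraints, and_assoc]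

theorem isFracBMatching_zero : IsFracBMatching G b 0 :=
  ⟨fun _ _ => ⟨le_rfl, zero_le_one⟩, fun _ => by simp⟩

theorem satisfiesOddSetConstraints_zero : SatisfiesOddSetConstraints G b 0 := by
  intro V A _ hodd
  have : (1 : ℝ) ≤ (b * V.card + A.card : ℕ) := by exact_mod_cast hodd.pos
  simp only [Pi.zero_apply, sum_const_zero]
  linarith

theorem IsFracBMatching.sum_mul_le_sum_abs {x : Sym2 (Fin n) → ℝ} (hx : IsFracBMatching G b x) :
    ∑ e ∈ G.edgeFinset, w e * x e ≤ ∑ e ∈ G.edgeFinset, |w e| := by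
  refine sum_le_sum fun e he => ?_
  have := hx.1 e he
  calc w e * x e ≤ |w e| * x e := mul_le_mul_of_nonneg_right (le_abs_self _) this.1
    _ ≤ |w e| := mul_le_of_le_one_right (abs_nonneg _) this.2

theorem IsFracBMatching.le_LPM0 {x : Sym2 (Fin n) → ℝ} (hx : IsFracBMatching G b x) :
    ∑ e ∈ G.edgeFinset, w e * x e ≤ LPM0 G w b := by
  rw [LPM0_eq_sSup]
  refine le_csSup ⟨∑ e ∈ G.edgeFinset, |w e|, ?_⟩ ⟨x, hx, rfl⟩
  rintro _ ⟨y, hy, rfl⟩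
  exact hy.sum_mul_le_sum_abs w

theorem IsFracBMatching.le_LPM {x : Sym2 (Fin n) → ℝ} (hx : IsFracBMatching G b x)
    (hodd : SatisfiesOddSetConstraints G b x) : ∑ e ∈ G.edgeFinset, w e * x e ≤ LPM G w b := by
  rw [LPM_eq_sSup]
  refine le_csSup ⟨∑ e ∈ G.edgeFinset, |w e|, ?_⟩ ⟨x, ⟨hx, hodd⟩, rfl⟩
  rintro _ ⟨y, ⟨hy, -⟩, rfl⟩
  exact hy.sum_mul_le_sum_abs w

theorem LPM_le_LPM0 : LPM G w b ≤ LPM0 G w b := by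
  rw [LPM_eq_sSup]
  refine csSup_le ⟨0, 0, ⟨isFracBMatching_zero, satisfiesOddSetConstraints_zero⟩, by simp⟩ ?_
  rintro _ ⟨x, ⟨hx, -⟩, rfl⟩
  exact hx.le_LPM0 w

theorem mul_LPM0_sub_le {c a : ℝ} (hc : 0 ≤ c)
    (h : ∀ x, IsFracBMatching G b x → c * (∑ e ∈ G.edgeFinset, w e * x e - a) ≤ LPM G w b) :
    c * (LPM0 G w b - a) ≤ LPM G w b := by
  rcases hc.eq_or_lt with rfl | hc
  · simpa using h 0 isFracBMatching_zero
  rw [← le_div_iff₀' hc, sub_le_iff_le_add, LPM0_eq_sSup]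
  refine csSup_le ⟨_, 0, isFracBMatching_zero, rfl⟩ ?_
  rintro _ ⟨x, hx, rfl⟩
  have := h x hx
  rw [← le_div_iff₀' hc] at this
  linarith

end LinearProgram

section Truncation

variable {n : ℕ} {G : SimpleGraph (Fin n)} [DecidableRel G.Adj] {b d : ℕ} {x : Sym2 (Fin n) → ℝ}
  {V : Finset (Fin n)} {A : Finset (Sym2 (Fin n))}

theorem IsFracBMatching.two_mul_sum_le (hx : IsFracBMatching G b x)
    (hA : A ⊆ G.edgeFinset.filter (fun e => ∃ u v', e = s(u, v') ∧ u ∈ V ∧ v' ∉ V)) :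
    2 * (∑ e ∈ G.edgeFinset.filter (fun e => ∀ a ∈ e, a ∈ V), x e + ∑ e ∈ A, x e) ≤
      (b * V.card + A.card : ℕ) := by
  have hcount := two_mul_sum_add_sum_le (fun e he => (hx.1 e he).1) (fun v _ => hx.2 v)
    (filter_subset _ _) (hA.trans (filter_subset _ _))
    (fun e he => ⟨G.not_isDiag_of_mem_edgeFinset (mem_filter.mp he).1, (mem_filter.mp he).2⟩)
    (fun e he => (mem_filter.mp (hA he)).2)
  have hAx : ∑ e ∈ A, x e ≤ A.card := by
    simpa using sum_le_card_nsmul A x 1 fun e he => (hx.1 e (mem_filter.mp (hA he)).1).2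
  push_cast
  linarith

theorem IsFracBMatching.oddSetConstraint_of_lt (hx : IsFracBMatching G b x) (hb : 1 ≤ b)
    (hxd : ∀ e, G.IsOnShortCycle d e → x e = 0)
    (hA : A ⊆ G.edgeFinset.filter (fun e => ∃ u v', e = s(u, v') ∧ u ∈ V ∧ v' ∉ V))
    (hodd : Odd (b * V.card + A.card)) (hd : b * V.card + A.card < d) :
    ∑ e ∈ G.edgeFinset.filter (fun e => ∀ a ∈ e, a ∈ V), x e + ∑ e ∈ A, x e ≤
      ((b * V.card + A.card : ℕ) - 1 : ℝ) / 2 := by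
  set I := {e ∈ G.edgeFinset.filter (fun e => ∀ a ∈ e, a ∈ V) | ¬ G.IsOnShortCycle d e}
  have hIE : I ⊆ G.edgeFinset := (filter_subset _ _).trans (filter_subset _ _)
  have hE : I ∪ A ⊆ G.edgeFinset := union_subset hIE (hA.trans (filter_subset _ _))
  have hI : ∑ e ∈ G.edgeFinset.filter (fun e => ∀ a ∈ e, a ∈ V), x e = ∑ e ∈ I, x e :=
    (sum_filter_of_ne (p := fun e => ¬ G.IsOnShortCycle d e)
      fun e _ hxe hshort => hxe (hxd e hshort)).symm
  rw [hI]
  refine oddSetConstraint_of_oneDegenerateOn (fun e he => hx.1 e (hE he))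
    (fun v _ => le_trans (sum_le_sum_of_subset_of_nonneg (filter_subset_filter _ hE)
      fun e he _ => (hx.1 e (mem_filter.mp he).1).1) (hx.2 v))
    (fun e he => ⟨G.not_isDiag_of_mem_edgeFinset (hIE he), (mem_filter.mp (mem_filter.mp he).1).2⟩)
    (fun e he => (mem_filter.mp (hA he)).2)
    ((G.oneDegenerateOn_edgeFinset_filter_not_isOnShortCycle (s := V) (by nlinarith)).mono
      Subset.rfl fun e he _ => mem_filter.mpr ⟨hIE he, (mem_filter.mp he).2⟩) hodd

variable (G d) in
def truncateShortCycles (x : Sym2 (Fin n) → ℝ) (e : Sym2 (Fin n)) : ℝ :=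
  if G.IsOnShortCycle d e then 0 else ((d : ℝ) - 1) / d * x e

theorem truncateShortCycles_le (hx : IsFracBMatching G b x) (hd : 1 ≤ d) {e : Sym2 (Fin n)}
    (he : e ∈ G.edgeFinset) : 0 ≤ truncateShortCycles G d x e ∧
      truncateShortCycles G d x e ≤ ((d : ℝ) - 1) / d * x e ∧
      truncateShortCycles G d x e ≤ x e := by
  have hd' : (1 : ℝ) ≤ d := by exact_mod_cast hd
  have hc : 0 ≤ ((d : ℝ) - 1) / d := div_nonneg (by linarith) (by linarith)
  have hc1 : ((d : ℝ) - 1) / d ≤ 1 := (div_le_one (by linarith)).mpr (by linarith)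
  have hx0 := (hx.1 e he).1
  unfold truncateShortCycles
  split_ifs
  · exact ⟨le_rfl, mul_nonneg hc hx0, hx0⟩
  · exact ⟨mul_nonneg hc hx0, le_rfl, mul_le_of_le_one_left hx0 hc1⟩

theorem isFracBMatching_truncateShortCycles (hx : IsFracBMatching G b x) (hd : 1 ≤ d) :
    IsFracBMatching G b (truncateShortCycles G d x) := by
  refine ⟨fun e he => ⟨(truncateShortCycles_le hx hd he).1, ?_⟩, fun i => ?_⟩
  · exact (truncateShortCycles_le hx hd he).2.2.trans (hx.1 e he).2
  · exact le_trans (sum_le_sum fun e he => (truncateShortCycles_le hx hd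
      (mem_filter.mp he).1).2.2) (hx.2 i)

theorem satisfiesOddSetConstraints_truncateShortCycles
    (hx : IsFracBMatching G b x) (hb : 1 ≤ b) (hd : 1 ≤ d) :
    SatisfiesOddSetConstraints G b (truncateShortCycles G d x) := by
  intro V A hA hodd
  set k := b * V.card + A.card
  by_cases hdk : d ≤ k
  · have hd' : (1 : ℝ) ≤ d := by exact_mod_cast hd
    have hdk' : (d : ℝ) ≤ k := by exact_mod_cast hdk
    have hc : 0 ≤ ((d : ℝ) - 1) / d := div_nonneg (by linarith) (by linarith)
    have hck : ((d : ℝ) - 1) / d * k ≤ k - 1 := by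
      rw [div_mul_eq_mul_div, div_le_iff₀ (by linarith)]
      nlinarith
    have hxk := mul_le_mul_of_nonneg_left (hx.two_mul_sum_le hA) hc
    have htx : ∀ s ⊆ G.edgeFinset, ∑ e ∈ s, truncateShortCycles G d x e ≤
        ((d : ℝ) - 1) / d * ∑ e ∈ s, x e := fun s hs => by
      rw [mul_sum]
      exact sum_le_sum fun e he => (truncateShortCycles_le hx hd (hs he)).2.1
    have := htx _ (filter_subset (fun e => ∀ a ∈ e, a ∈ V) _)
    have := htx A (hA.trans (filter_subset _ _))
    linarith
  · exact (isFracBMatching_truncateShortCycles hx hd).oddSetConstraint_of_lt hb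
      (fun e he => if_pos he) hA hodd (not_le.mp hdk)

theorem sum_mul_truncateShortCycles (w : Sym2 (Fin n) → ℝ) :
    ∑ e ∈ G.edgeFinset, w e * truncateShortCycles G d x e =
      ((d : ℝ) - 1) / d * ∑ e ∈ G.edgeFinset with ¬ G.IsOnShortCycle d e, w e * x e := by
  rw [mul_sum, sum_filter]
  refine sum_congr rfl fun e _ => ?_
  unfold truncateShortCycles
  split_ifs <;> ring

theorem edgesOnShortCycles_eq_card :
    edgesOnShortCycles G d = #{e ∈ G.edgeFinset | G.IsOnShortCycle d e} := by
  rw [edgesOnShortCycles, Nat.card_eq_fintype_card, Fintype.card_subtype]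
  congr 1
  ext e
  simp only [mem_filter, mem_univ, true_and, SimpleGraph.mem_edgeFinset]
  refine ⟨fun h => ⟨?_, h⟩, And.right⟩
  obtain ⟨u, p, -, -, he⟩ := h
  exact p.edges_subset_edgeSet he

theorem sum_filter_isOnShortCycle_le {w : Sym2 (Fin n) → ℝ} {wmax : ℝ}
    (hw : ∀ e ∈ G.edgeFinset, 0 ≤ w e ∧ w e ≤ wmax) (hx : IsFracBMatching G b x) :
    ∑ e ∈ G.edgeFinset with G.IsOnShortCycle d e, w e * x e ≤
      edgesOnShortCycles G d * wmax := by
  rw [edgesOnShortCycles_eq_card]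
  calc _ ≤ ∑ e ∈ G.edgeFinset with G.IsOnShortCycle d e, wmax := sum_le_sum fun e he => by
        have he := (mem_filter.mp he).1
        exact (mul_le_of_le_one_right (hw e he).1 (hx.1 e he).2).trans (hw e he).2
    _ = _ := by rw [sum_const, nsmul_eq_mul]

end Truncation

/-- **The odd-set constraints cost little when there are few short cycles.**
For a finite weighted graph `G` with edge weights in `[0, w_max]`, an integer `b ≥ 1` and
`d ≥ 3`, with `M(d)` the number of edges on cycles of length `< d`:
`((d−1)/d)·(LPM⁰(G) − M(d)·w_max) ≤ LPM(G) ≤ LPM⁰(G)`. -/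
theorem lpm_vs_lpm0
    {n : ℕ} (G : SimpleGraph (Fin n)) [DecidableRel G.Adj]
    (w : Sym2 (Fin n) → ℝ) (wmax : ℝ)
    (hw : ∀ e ∈ G.edgeFinset, 0 ≤ w e ∧ w e ≤ wmax)
    (b : ℕ) (hb : 1 ≤ b) (d : ℕ) (hd : 3 ≤ d) :
    ((d : ℝ) - 1) / d * (LPM0 G w b - (edgesOnShortCycles G d : ℝ) * wmax) ≤ LPM G w b ∧
    LPM G w b ≤ LPM0 G w b := by
  have hd1 : 1 ≤ d := by omega
  have hc : 0 ≤ ((d : ℝ) - 1) / d :=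
    div_nonneg (sub_nonneg.mpr (by exact_mod_cast hd1)) (Nat.cast_nonneg d)
  refine ⟨mul_LPM0_sub_le w hc fun x hx => ?_, LPM_le_LPM0 w⟩
  have hsplit := sum_filter_add_sum_filter_not G.edgeFinset (G.IsOnShortCycle d) (w * x)
  have hshort := sum_filter_isOnShortCycle_le (d := d) hw hx
  calc ((d : ℝ) - 1) / d * (∑ e ∈ G.edgeFinset, w e * x e - edgesOnShortCycles G d * wmax)
      ≤ ((d : ℝ) - 1) / d * ∑ e ∈ G.edgeFinset with ¬ G.IsOnShortCycle d e, w e * x e :=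
        mul_le_mul_of_nonneg_left (by simp only [Pi.mul_apply] at hsplit; linarith) hc
    _ = ∑ e ∈ G.edgeFinset, w e * truncateShortCycles G d x e :=
        (sum_mul_truncateShortCycles w).symm
    _ ≤ LPM G w b := (isFracBMatching_truncateShortCycles hx hd1).le_LPM w
        (satisfiesOddSetConstraints_truncateShortCycles hx hb hd1)
end
end

section
/- Suppose Condition ℬ holds with parameters l and ν. Fix any n-dimensional cube I = Π_{i=1}^n [t_i/l, (t_i+1)/l] with t_i integers and B¹ₓ ≤ t_i/l < B²ₓ, and let LP_I(n,c) denote the optimal value of LP(n,c) when the variables x are restricted to lie in I. Then P(LP_I(n,c) ≤ (1/2)·ν·m/|𝒞|) ≤ e^{−m/(8|𝒞|)}, where m = ⌊cn⌋. -/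
open MeasureTheory ProbabilityTheory Filter

noncomputable section

/-- The optimal value of the random linear program when each variable `x_i` is restricted to the
interval `[lo i, hi i]` (minimize `Σ_j ψ_j` subject to the random constraints with slacks
`ψ_j ≥ 0`). -/
def LPvalBox {K N n m : ℕ} (A : Fin N → Fin K → ℝ) (bv : Fin N → ℝ)
    (lo hi : Fin n → ℝ) (ω : LPInst K N n m) : ℝ :=
  sInf { v : ℝ | ∃ (x : Fin n → ℝ) (ψ : Fin m → ℝ),
    (∀ i, x i ∈ Set.Icc (lo i) (hi i)) ∧ (∀ j, 0 ≤ ψ j) ∧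
    (∀ j, ∑ k, A ((ω j).2) k * x ((ω j).1 k) ≤ bv ((ω j).2) + ψ j) ∧
    v = ∑ j, ψ j }


/-! Each of the `m` random constraints independently picks, with probability `1/|𝒞|`, the
prototype that Condition ℬ attaches to the `K`-cube spanned by its variables; such a constraint is
violated by at least `ν` everywhere on `I`, so `LP_I` is at least `ν` times the number `X` of these
"hits". `X` is binomial with mean `m/|𝒞|`, and the exponential Markov inequality with
`E[2^{-X}] = (1 - 1/(2|𝒞|))^m ≤ e^{-m/(2|𝒞|)}` gives
`P(X ≤ m/(2|𝒞|)) ≤ e^{-(1 - log 2) m/(2|𝒞|)} ≤ e^{-m/(8|𝒞|)}`. -/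

open Finset Real

theorem card_filter_snd_eq_apply_fst {α γ : Type*} [Fintype α] [Fintype γ] [DecidableEq γ]
    (f : α → γ) : #{p : α × γ | p.2 = f p.1} = Fintype.card α := by
  rw [card_filter, Fintype.sum_prod_type]
  simp

section Hits

variable {β : Type*} [Fintype β] [DecidableEq β] {m : ℕ}

def hitCount (G : Finset β) (ω : Fin m → β) : ℕ := #{j | ω j ∈ G}

theorem sum_exp_neg_mul_hitCount (G : Finset β) (s : ℝ) :
    ∑ ω : Fin m → β, exp (-s * hitCount G ω) = (Fintype.card β - #G * (1 - exp (-s))) ^ m := by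
  have hcoord : ∑ b : β, (if b ∈ G then exp (-s) else 1) =
      Fintype.card β - #G * (1 - exp (-s)) := by
    have hsplit : ∀ b : β, (if b ∈ G then exp (-s) else 1) =
        1 - if b ∈ G then 1 - exp (-s) else 0 := fun b => by split_ifs <;> ring
    simp only [hsplit, sum_sub_distrib, sum_ite_mem, univ_inter, sum_const, card_univ,
      nsmul_eq_mul, mul_one]
    ring
  rw [← hcoord, Fintype.sum_pow]
  refine Fintype.sum_congr _ _ fun ω => ?_
  rw [hitCount, card_filter, Nat.cast_sum, mul_sum, exp_sum]
  refine prod_congr rfl fun j _ => ?_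
  split_ifs <;> simp

theorem card_filter_hitCount_le_le_mul_exp {G : Finset β} {p : ℝ} (hp : 0 ≤ p)
    (hG : p * Fintype.card β ≤ #G) :
    (#{ω : Fin m → β | (hitCount G ω : ℝ) ≤ m * p / 2} : ℝ) ≤
      Fintype.card β ^ m * exp (-(m * p) / 8) := by
  set S := ({ω : Fin m → β | (hitCount G ω : ℝ) ≤ m * p / 2} : Finset _)
  have hmarkov :
      #S * exp (-log 2 * (m * p / 2)) ≤ ∑ ω : Fin m → β, exp (-log 2 * hitCount G ω) :=
    calc #S * exp (-log 2 * (m * p / 2)) = ∑ _ω ∈ S, exp (-log 2 * (m * p / 2)) := by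
          rw [sum_const, nsmul_eq_mul]
      _ ≤ ∑ ω ∈ S, exp (-log 2 * hitCount G ω) := sum_le_sum fun ω hω =>
          exp_le_exp.2 (by nlinarith [(mem_filter.1 hω).2, log_pos one_lt_two])
      _ ≤ _ := sum_le_sum_of_subset_of_nonneg (subset_univ _) fun _ _ _ => (exp_pos _).le
  have hmgf : ∑ ω : Fin m → β, exp (-log 2 * hitCount G ω) ≤
      Fintype.card β ^ m * exp (-(m * p) / 2) := by
    have hGβ : (#G : ℝ) ≤ Fintype.card β := by exact_mod_cast card_le_univ G
    rw [sum_exp_neg_mul_hitCount, exp_neg, exp_log two_pos]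
    calc ((Fintype.card β : ℝ) - #G * (1 - 2⁻¹)) ^ m
        ≤ (Fintype.card β * exp (-p / 2)) ^ m := by
          refine pow_le_pow_left₀ (by linarith) ?_ m
          nlinarith [add_one_le_exp (-p / 2)]
      _ = Fintype.card β ^ m * exp (-(m * p) / 2) := by
          rw [mul_pow, ← exp_nat_mul]; ring_nf
  rw [← le_div_iff₀ (exp_pos _)] at hmarkov
  calc (#S : ℝ) ≤ Fintype.card β ^ m * exp (-(m * p) / 2) / exp (-log 2 * (m * p / 2)) :=
        hmarkov.trans (div_le_div_of_nonneg_right hmgf (exp_pos _).le)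
    _ ≤ Fintype.card β ^ m * exp (-(m * p) / 8) := by
        rw [mul_div_assoc, ← exp_sub]
        gcongr
        nlinarith [log_two_lt_d9, mul_nonneg m.cast_nonneg hp]

theorem toReal_uniformOn_hitCount_le_le_exp [MeasurableSpace β] [MeasurableSingletonClass β]
    {G : Finset β} {p : ℝ} (hp : 0 ≤ p) (hG : p * Fintype.card β ≤ #G) :
    (uniformOn (Set.univ : Set (Fin m → β)) {ω | (hitCount G ω : ℝ) ≤ m * p / 2}).toReal ≤
      exp (-(m * p) / 8) := by
  rw [uniformOn_univ, ENNReal.toReal_div, ← coe_filter_univ, Measure.count_apply_finset]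
  simp only [ENNReal.toReal_natCast, Fintype.card_fun, Fintype.card_fin, Nat.cast_pow]
  exact div_le_of_le_mul₀ (by positivity) (exp_pos _).le
    ((card_filter_hitCount_le_le_mul_exp hp hG).trans_eq (mul_comm _ _))

end Hits

theorem mul_card_le_LPvalBox {K N n m : ℕ} {A : Fin N → Fin K → ℝ} {bv : Fin N → ℝ}
    {lo hi : Fin n → ℝ} (hlohi : ∀ i, lo i ≤ hi i) {ω : LPInst K N n m} {ν : ℝ}
    {J : Finset (Fin m)}
    (hJ : ∀ j ∈ J, ∀ x : Fin n → ℝ, (∀ i, x i ∈ Set.Icc (lo i) (hi i)) →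
      ν ≤ ∑ k, A (ω j).2 k * x ((ω j).1 k) - bv (ω j).2) :
    ν * #J ≤ LPvalBox A bv lo hi ω := by
  apply le_csInf
  · set excess := fun j : Fin m => ∑ k, A (ω j).2 k * lo ((ω j).1 k) - bv (ω j).2
    refine ⟨_, lo, fun j => max 0 (excess j), fun i => ⟨le_rfl, hlohi i⟩,
      fun j => le_max_left _ _, fun j => ?_, rfl⟩
    linarith [le_max_right 0 (excess j)]
  · rintro _ ⟨x, ψ, hx, hψ, hfeas, rfl⟩
    calc ν * #J = ∑ _j ∈ J, ν := by rw [sum_const, nsmul_eq_mul, mul_comm]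
      _ ≤ ∑ j ∈ J, ψ j := sum_le_sum fun j hj => by linarith [hJ j hj x hx, hfeas j]
      _ ≤ ∑ j, ψ j := sum_le_sum_of_subset_of_nonneg (subset_univ J) fun j _ _ => hψ j

theorem mul_hitCount_le_LPvalBox {K N n m : ℕ} {A : Fin N → Fin K → ℝ} {bv : Fin N → ℝ}
    {lo hi : Fin n → ℝ} (hlohi : ∀ i, lo i ≤ hi i) {ν : ℝ} {rstar : (Fin K → Fin n) → Fin N}
    (hrstar : ∀ (v : Fin K → Fin n) (y : Fin K → ℝ),
      (∀ k, y k ∈ Set.Icc (lo (v k)) (hi (v k))) → ν ≤ ∑ k, A (rstar v) k * y k - bv (rstar v))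
    (ω : LPInst K N n m) :
    ν * hitCount {p | p.2 = rstar p.1} ω ≤ LPvalBox A bv lo hi ω :=
  mul_card_le_LPvalBox hlohi fun j hj x hx => by
    rw [(mem_filter.1 (mem_filter.1 hj).2).2]
    exact hrstar _ _ fun k => hx _

theorem lp_cube_chernoff_general
    (K N : ℕ)
    (A : Fin N → Fin K → ℝ) (bv : Fin N → ℝ)
    (B1 B2 : ℝ)
    (l : ℕ) (ν : ℝ) (hcond : ConditionBWith A bv B1 B2 l ν)
    (c : ℝ) (n : ℕ)
    (t : Fin n → ℤ) (ht : ∀ i, B1 ≤ (t i : ℝ) / l ∧ (t i : ℝ) / l < B2) :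
    ((lpMeasure K N n ⌊c * n⌋₊)
        {ω | LPvalBox A bv (fun i => (t i : ℝ) / l) (fun i => ((t i : ℝ) + 1) / l) ω ≤
          (1 / 2) * ν * (⌊c * n⌋₊ : ℝ) / N}).toReal ≤
      Real.exp (-(⌊c * n⌋₊ : ℝ) / (8 * N)) := by
  obtain ⟨-, hν, hcube⟩ := hcond
  choose rstar hrstar using fun v : Fin K → Fin n => hcube (fun k => t (v k)) fun k => ht (v k)
  set m := ⌊c * n⌋₊
  let G : Finset ((Fin K → Fin n) × Fin N) := {p | p.2 = rstar p.1}
  have hG : (N : ℝ)⁻¹ * Fintype.card ((Fin K → Fin n) × Fin N) ≤ #G := by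
    rw [card_filter_snd_eq_apply_fst, Fintype.card_prod, Fintype.card_fin, Nat.cast_mul,
      mul_comm, mul_assoc]
    exact mul_le_of_le_one_right (Nat.cast_nonneg _) mul_inv_le_one
  have hevent : {ω : LPInst K N n m | LPvalBox A bv (fun i => (t i : ℝ) / l)
      (fun i => ((t i : ℝ) + 1) / l) ω ≤ 1 / 2 * ν * m / N} ⊆
      {ω | (hitCount G ω : ℝ) ≤ m * (N : ℝ)⁻¹ / 2} := by
    intro ω hω
    refine le_of_mul_le_mul_left ?_ hν
    calc ν * hitCount G ω ≤ _ := mul_hitCount_le_LPvalBox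
          (fun i => div_le_div_of_nonneg_right (by linarith) l.cast_nonneg) hrstar ω
      _ ≤ 1 / 2 * ν * m / N := hω
      _ = ν * (m * (N : ℝ)⁻¹ / 2) := by ring
  calc _ ≤ (uniformOn Set.univ
          {ω : LPInst K N n m | (hitCount G ω : ℝ) ≤ m * (N : ℝ)⁻¹ / 2}).toReal :=
        ENNReal.toReal_mono (measure_ne_top _ _) (measure_mono hevent)
    _ ≤ exp (-(m * (N : ℝ)⁻¹) / 8) := toReal_uniformOn_hitCount_le_le_exp (by positivity) hG
    _ = _ := by congr 1; ring

/-- **Chernoff bound for the cube-restricted LP under Condition ℬ.**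
If Condition ℬ holds with parameters `l` and `ν`, then for any cube
`I = Π_i [t_i/l, (t_i+1)/l]` with integer `t_i` and `B¹ₓ ≤ t_i/l < B²ₓ`,
`P(LP_I(n,c) ≤ (1/2)·ν·m/|𝒞|) ≤ exp(−m/(8|𝒞|))`, where `m = ⌊cn⌋`. -/
theorem lp_cube_chernoff
    (K N : ℕ) (hK : 2 ≤ K) (hN : 1 ≤ N)
    (A : Fin N → Fin K → ℝ) (bv : Fin N → ℝ)
    (B1 B2 : ℝ) (hB : B1 ≤ B2)
    (l : ℕ) (ν : ℝ) (hcond : ConditionBWith A bv B1 B2 l ν)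
    (c : ℝ) (hc : 0 < c) (n : ℕ)
    (t : Fin n → ℤ) (ht : ∀ i, B1 ≤ (t i : ℝ) / l ∧ (t i : ℝ) / l < B2) :
    ((lpMeasure K N n ⌊c * n⌋₊)
        {ω | LPvalBox A bv (fun i => (t i : ℝ) / l) (fun i => ((t i : ℝ) + 1) / l) ω ≤
          (1 / 2) * ν * (⌊c * n⌋₊ : ℝ) / N}).toReal ≤
      Real.exp (-(⌊c * n⌋₊ : ℝ) / (8 * N)) :=
  lp_cube_chernoff_general K N A bv B1 B2 l ν hcond c n t ht
end
end
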